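/- For ∨-composable TIOTSs P₀ and P₁ with triple-trace structures (I, O, TT_i, TR_i, TE_i), the triple-trace structure of P₀ ∨ P₁ is (I, O, TR₀ ∪ TR₁ ∪ TM, TR₀ ∪ TR₁, TE₀ ∪ TE₁), where TM = { tt | ∃i: tt ∈ TT_i ∖ TR_i and ∃ tt₀ ≤ tt: tt₀ ∈ TT_ī ∖ TR_ī } · ℝ≥0 (ī = 1 − i). -/

import Mathlib

open Classical

namespace TSpec

/-- Positive real time delays. -/
abbrev Delay : Type := {d : ℝ // 0 < d}

/-- Sum of two positive delays. -/
def dsum (d e : Delay) : Delay := ⟨d.1 + e.1, add_pos d.2 e.2⟩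

/-- Timed actions over an action alphabet `Act`: visible actions or positive delays. -/
inductive TAct (Act : Type) : Type where
  | act : Act → TAct Act
  | delay : Delay → TAct Act

/-- A timed action is a delay. -/
def TAct.isDelay {Act : Type} : TAct Act → Prop
  | .act _ => False
  | .delay _ => True

/-- A timed action is valid for a set `A` of visible actions:
visible actions must belong to `A`, delays are always valid.
(For `A = O` this expresses membership in the timed outputs `tO = O ⊎ ℝ>0`,
for `A = I ∪ O` membership in the timed alphabet `tA`.) -/
def TAct.valid {Act : Type} (A : Set Act) : TAct Act → Prop
  | .act a => a ∈ A
  | .delay _ => True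

/-- Timed words: finite sequences of timed actions. -/
abbrev TWord (Act : Type) := List (TAct Act)

/-- Well-formed timed word: no two adjacent delays (reals). -/
def IsTWord {Act : Type} (w : TWord Act) : Prop :=
  List.Chain' (fun x y => ¬ (TAct.isDelay x ∧ TAct.isDelay y)) w

/-- Well-formed timed word over the alphabet `A`. -/
def ValidW {Act : Type} (A : Set Act) (w : TWord Act) : Prop :=
  IsTWord w ∧ ∀ α ∈ w, TAct.valid A α

/-- Concatenation of timed words, coalescing (summing) adjacent delays. -/
def tcat {Act : Type} (w w' : TWord Act) : TWord Act :=
  match w.getLast?, w' with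
  | some (TAct.delay d), TAct.delay e :: rest => w.dropLast ++ TAct.delay (dsum d e) :: rest
  | _, _ => w ++ w'

/-- `Pref w₀ w`: `w₀` is a prefix of `w` (w.r.t. coalescing concatenation). -/
def Pref {Act : Type} (w₀ w : TWord Act) : Prop := ∃ w₁, tcat w₀ w₁ = w

/-- Strict prefix. -/
def SPref {Act : Type} (w₀ w : TWord Act) : Prop := Pref w₀ w ∧ w₀ ≠ w

/-- `X · tA*`: all extensions of words in `X` by timed words over the alphabet `A`. -/
def Ext {Act : Type} (A : Set Act) (X : Set (TWord Act)) : Set (TWord Act) :=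
  {w | ∃ w₀ ∈ X, ∃ w₁, ValidW A w₁ ∧ w = tcat w₀ w₁}

/-- `X · ℝ≥0`: all extensions of words in `X` by a (possibly zero) delay. -/
def ExtDelay {Act : Type} (X : Set (TWord Act)) : Set (TWord Act) :=
  X ∪ {w | ∃ w₀ ∈ X, ∃ d : Delay, w = tcat w₀ [TAct.delay d]}

/-- `w` is a time-extension of `w₀`: equal, or extended by a single delay. -/
def TimeExt {Act : Type} (w₀ w : TWord Act) : Prop :=
  w = w₀ ∨ ∃ d : Delay, w = tcat w₀ [TAct.delay d]

/-- States of a TIOTS: plain states together with the inconsistent state `⊥`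
and the timestop state `⊤`. -/
inductive St (σ : Type) : Type where
  | plain : σ → St σ
  | bot : St σ
  | top : St σ

/-- Map a function on plain states over `St`, preserving `⊥` and `⊤`. -/
def St.map {σ τ : Type} (f : σ → τ) : St σ → St τ
  | .plain p => .plain (f p)
  | .bot => .bot
  | .top => .top

/-- Interchange `⊤` and `⊥`. -/
def St.swap {σ : Type} : St σ → St σ
  | .plain p => .plain p
  | .bot => .top
  | .top => .bot

/-- Timed I/O transition system over action alphabet `Act`:
inputs `I`, outputs `O`, plain-state type `Sig`, initial state, and a
transition relation labelled by timed actions. -/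
structure TIOTS (Act : Type) : Type 1 where
  Sig : Type
  I : Set Act
  O : Set Act
  init : St Sig
  tr : St Sig → TAct Act → St Sig → Prop

/-- Full (visible) alphabet of a TIOTS. -/
def TIOTS.A {Act : Type} (P : TIOTS Act) : Set Act := P.I ∪ P.O

/-- Well-formedness: disjoint inputs/outputs, alphabet-respecting transitions,
`⊤` quiescent (exactly the delay self-loops), `⊥` chaotic (exactly the
self-loops for each timed action of the alphabet), and time additivity. -/
def WF {Act : Type} (P : TIOTS Act) : Prop :=
  Disjoint P.I P.O ∧
  (∀ s α s', P.tr s α s' → TAct.valid P.A α) ∧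
  (∀ α (s' : St P.Sig), P.tr .top α s' ↔ (TAct.isDelay α ∧ s' = .top)) ∧
  (∀ α (s' : St P.Sig), P.tr .bot α s' ↔ (TAct.valid P.A α ∧ s' = .bot)) ∧
  (∀ (p : P.Sig) (d e : Delay) (s' : St P.Sig),
      P.tr (.plain p) (.delay (dsum d e)) s' ↔
        ∃ s, P.tr (.plain p) (.delay d) s ∧ P.tr s (.delay e) s')

/-- Determinism: no ambiguous transitions. -/
def Deterministic {Act : Type} (P : TIOTS Act) : Prop :=
  ∀ s α s' s'', P.tr s α s' → P.tr s α s'' → s' = s''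

/-- `α` is enabled at state `s`. -/
def enabled {Act : Type} (P : TIOTS Act) (s : St P.Sig) (α : TAct Act) : Prop :=
  ∃ s', P.tr s α s'

/-- `⊥`-completion: add `p →a ⊥` for every plain state `p` and input `a` not enabled at `p`. -/
def botComplete {Act : Type} (P : TIOTS Act) : TIOTS Act :=
  { P with
    tr := fun s α s' =>
      P.tr s α s' ∨
        ((∃ p, s = St.plain p) ∧ (∃ a ∈ P.I, α = TAct.act a) ∧ ¬ enabled P s α ∧ s' = .bot) }

/-- `⊤`-completion: add `p →α ⊤` for every plain state `p` and timed output `α ∈ tO`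
not enabled at `p`. -/
def topComplete {Act : Type} (P : TIOTS Act) : TIOTS Act :=
  { P with
    tr := fun s α s' =>
      P.tr s α s' ∨
        ((∃ p, s = St.plain p) ∧ TAct.valid P.O α ∧ ¬ enabled P s α ∧ s' = .top) }

/-- `(P^⊥)^⊤`. -/
def TIOTS.complete {Act : Type} (P : TIOTS Act) : TIOTS Act := topComplete (botComplete P)

/-- Finite executions: `Exec P s w s'` holds when there is a finite execution from
`s` to `s'` whose trace (labels with adjacent delays coalesced) is `w`. -/
inductive Exec {Act : Type} (P : TIOTS Act) : St P.Sig → TWord Act → St P.Sig → Prop where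
  | nil (s : St P.Sig) : Exec P s [] s
  | cons {s : St P.Sig} {α : TAct Act} {s' : St P.Sig} {w : TWord Act} {s'' : St P.Sig} :
      P.tr s α s' → Exec P s' w s'' → Exec P s (tcat [α] w) s''

/-- `s` is reachable from the initial state via trace `w`. -/
def Reach {Act : Type} (P : TIOTS Act) (w : TWord Act) (s : St P.Sig) : Prop :=
  Exec P P.init w s

/-- `⊥`-freeness: `⊥` is not reachable from the initial state. -/
def BotFree {Act : Type} (P : TIOTS Act) : Prop := ∀ w, ¬ Reach P w .bot

/-- Error traces of `P`: traces of `(P^⊥)^⊤` leading to `⊥`. -/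
def TEset {Act : Type} (P : TIOTS Act) : Set (TWord Act) := {w | Reach P.complete w .bot}

/-- Magic traces of `P`: traces of `(P^⊥)^⊤` leading to `⊤`. -/
def TMset {Act : Type} (P : TIOTS Act) : Set (TWord Act) := {w | Reach P.complete w .top}

/-- Plain traces of `P`: traces of `(P^⊥)^⊤` leading to a plain state. -/
def TPset {Act : Type} (P : TIOTS Act) : Set (TWord Act) :=
  {w | ∃ p, Reach P.complete w (St.plain p)}

/-- Realisable traces: `TR = TE ∪ TP`. -/
def TRset {Act : Type} (P : TIOTS Act) : Set (TWord Act) := TEset P ∪ TPset P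

/-- All traces: `TT = TE ∪ TP ∪ TM`. -/
def TTset {Act : Type} (P : TIOTS Act) : Set (TWord Act) := TEset P ∪ TPset P ∪ TMset P

/-- Composite plain-state space for binary operators: lone left states, lone right
states, and product states. -/
def CState (σ₀ σ₁ : Type) : Type := σ₀ ⊕ σ₁ ⊕ σ₀ × σ₁

def pairSt {σ₀ σ₁ : Type} (p : σ₀) (q : σ₁) : CState σ₀ σ₁ := Sum.inr (Sum.inr (p, q))

def embL {σ₀ σ₁ : Type} : St σ₀ → St (CState σ₀ σ₁) := St.map (fun p => Sum.inl p)

def embR {σ₀ σ₁ : Type} : St σ₁ → St (CState σ₀ σ₁) := St.map (fun q => Sum.inr (Sum.inl q))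

/-- State table for parallel composition: `⊤` if either is `⊤`, otherwise `⊥`
if either is `⊥`, otherwise the pair. -/
def stPar {σ₀ σ₁ : Type} : St σ₀ → St σ₁ → St (CState σ₀ σ₁)
  | .top, _ => .top
  | _, .top => .top
  | .bot, _ => .bot
  | _, .bot => .bot
  | .plain p, .plain q => .plain (pairSt p q)

/-- State table for conjunction: `⊤` if either is `⊤`, otherwise the other
operand if either is `⊥`, otherwise the pair. -/
def stAnd {σ₀ σ₁ : Type} : St σ₀ → St σ₁ → St (CState σ₀ σ₁)
  | .top, _ => .top
  | _, .top => .top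
  | .bot, .bot => .bot
  | .bot, .plain q => .plain (Sum.inr (Sum.inl q))
  | .plain p, .bot => .plain (Sum.inl p)
  | .plain p, .plain q => .plain (pairSt p q)

/-- State table for disjunction: `⊥` if either is `⊥`, otherwise the other
operand if either is `⊤`, otherwise the pair. -/
def stOr {σ₀ σ₁ : Type} : St σ₀ → St σ₁ → St (CState σ₀ σ₁)
  | .bot, _ => .bot
  | _, .bot => .bot
  | .top, .top => .top
  | .top, .plain q => .plain (Sum.inr (Sum.inl q))
  | .plain p, .top => .plain (Sum.inl p)
  | .plain p, .plain q => .plain (pairSt p q)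

/-- State table for quotient `s₀ % s₁`: `⊥` if `s₁ = ⊤`, or if `s₀ = ⊥` and `s₁ ≠ ⊤`;
`⊤` if `s₁ = ⊥` and `s₀ ≠ ⊥`, or if `s₀ = ⊤` and `s₁` plain; the pair if both plain. -/
def stQuo {σ₀ σ₁ : Type} : St σ₀ → St σ₁ → St (CState σ₀ σ₁)
  | _, .top => .bot
  | .bot, _ => .bot
  | _, .bot => .top
  | .top, .plain _ => .top
  | .plain p, .plain q => .plain (pairSt p q)

/-- Synchronised product of two (already `⊥`- and `⊤`-completed) TIOTSs, with the
given state-combination table and alphabets. The transition relation contains the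
embedded component transitions (on lone states); from product states, shared
actions and all delays synchronise while independent visible actions interleave;
`⊥` is chaotic and `⊤` quiescent. -/
def rawProd {Act : Type} (P Q : TIOTS Act)
    (comb : St P.Sig → St Q.Sig → St (CState P.Sig Q.Sig)) (I O : Set Act) : TIOTS Act where
  Sig := CState P.Sig Q.Sig
  I := I
  O := O
  init := comb P.init Q.init
  tr := fun s α s' =>
    (∃ p s₀, s = St.plain (Sum.inl p) ∧ P.tr (.plain p) α s₀ ∧ s' = embL s₀) ∨
    (∃ q s₁, s = St.plain (Sum.inr (Sum.inl q)) ∧ Q.tr (.plain q) α s₁ ∧ s' = embR s₁) ∨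
    (∃ p q, s = St.plain (pairSt p q) ∧
      ((TAct.valid (P.A ∩ Q.A) α ∧
          ∃ (s₀ : St P.Sig) (s₁ : St Q.Sig),
            P.tr (.plain p) α s₀ ∧ Q.tr (.plain q) α s₁ ∧ s' = comb s₀ s₁) ∨
       (∃ a, α = TAct.act a ∧ a ∈ P.A \ Q.A ∧
          ∃ s₀ : St P.Sig, P.tr (.plain p) α s₀ ∧ s' = comb s₀ (.plain q)) ∨
       (∃ a, α = TAct.act a ∧ a ∈ Q.A \ P.A ∧
          ∃ s₁ : St Q.Sig, Q.tr (.plain q) α s₁ ∧ s' = comb (.plain p) s₁))) ∨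
    (s = .bot ∧ TAct.valid (I ∪ O) α ∧ s' = .bot) ∨
    (s = .top ∧ TAct.isDelay α ∧ s' = .top)

/-- Parallel composition `P ∥ Q` (requires `∥`-composability: disjoint output sets). -/
def parC {Act : Type} (P Q : TIOTS Act) : TIOTS Act :=
  rawProd P.complete Q.complete stPar ((P.I ∪ Q.I) \ (P.O ∪ Q.O)) (P.O ∪ Q.O)

/-- Conjunction `P ∧ Q` (requires identical alphabets). -/
def andC {Act : Type} (P Q : TIOTS Act) : TIOTS Act :=
  rawProd P.complete Q.complete stAnd P.I P.O

/-- Disjunction `P ∨ Q` (requires identical alphabets). -/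
def orC {Act : Type} (P Q : TIOTS Act) : TIOTS Act :=
  rawProd P.complete Q.complete stOr P.I P.O

/-- Reduction of a subset of states in the subset construction: a subset containing
`⊥` becomes `⊥`; `⊤` is removed from any subset other than `{⊤}`. -/
noncomputable def detSt {σ : Type} (X : Set (St σ)) : St (Set σ) :=
  if St.bot ∈ X then .bot
  else if X = {St.top} then .top
  else .plain {p | St.plain p ∈ X}

/-- Successor subset. -/
def post {Act : Type} (P : TIOTS Act) (X : Set P.Sig) (α : TAct Act) : Set (St P.Sig) :=
  {s' | ∃ p ∈ X, P.tr (.plain p) α s'}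

/-- Determinisation `P^D` by subset construction on `(P^⊥)^⊤`. -/
noncomputable def TIOTS.det {Act : Type} (P : TIOTS Act) : TIOTS Act where
  Sig := Set P.Sig
  I := P.I
  O := P.O
  init := detSt {P.complete.init}
  tr := fun s α s' =>
    (∃ X, s = St.plain X ∧ TAct.valid P.A α ∧ s' = detSt (post P.complete X α)) ∨
    (s = .bot ∧ TAct.valid P.A α ∧ s' = .bot) ∨
    (s = .top ∧ TAct.isDelay α ∧ s' = .top)

/-- Mirror `P¬`: determinise, then interchange inputs with outputs and `⊤` with `⊥`. -/
noncomputable def TIOTS.mirror {Act : Type} (P : TIOTS Act) : TIOTS Act where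
  Sig := (P.det).Sig
  I := P.O
  O := P.I
  init := St.swap (P.det).init
  tr := fun s α s' => (P.det).tr (St.swap s) α (St.swap s')

/-- Alphabet domination: `A_Q ⊆ A_P` and `O_Q ⊆ O_P`. -/
def Dominates {Act : Type} (P Q : TIOTS Act) : Prop := Q.A ⊆ P.A ∧ Q.O ⊆ P.O

/-- Quotient `P % Q` (requires that `P` dominates `Q`); `Q` is determinised first. -/
noncomputable def quoC {Act : Type} (P Q : TIOTS Act) : TIOTS Act :=
  rawProd P.complete (Q.det).complete stQuo (P.I ∪ Q.O) (P.O \ Q.O)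

/-- `Q` is an environment for `P`: complementary alphabets. -/
def Env {Act : Type} (P Q : TIOTS Act) : Prop := Q.I = P.O ∧ Q.O = P.I

/-- Substitutive refinement: `Refines P Q` means `P ⊑ Q`, i.e. the alphabets agree and
for every environment `R`, `⊥`-freeness of `P ∥ R` implies `⊥`-freeness of `Q ∥ R`. -/
def Refines {Act : Type} (P Q : TIOTS Act) : Prop :=
  P.I = Q.I ∧ P.O = Q.O ∧
  ∀ R : TIOTS Act, WF R → Env P R → BotFree (parC P R) → BotFree (parC Q R)

/-- Substitutive equivalence `P ≃ Q`. -/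
def SEquiv {Act : Type} (P Q : TIOTS Act) : Prop := Refines P Q ∧ Refines Q P

/-- Enabled timed actions at a plain state. -/
def eb {Act : Type} (G : TIOTS Act) (p : G.Sig) : Set (TAct Act) :=
  {α | enabled G (.plain p) α}

/-- The component move(s) proposed at a plain state: enabled outputs and delays. -/
def mvSet {Act : Type} (G : TIOTS Act) (p : G.Sig) : Set (TAct Act) :=
  {α | enabled G (.plain p) α ∧ TAct.valid G.O α}

/-- One-step relation between plain states. -/
def plainStep {Act : Type} (G : TIOTS Act) (p p' : G.Sig) : Prop :=
  ∃ α, G.tr (.plain p) α (.plain p')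

/-- Tree TIOTS: acyclic (on plain states), no state is the target of both an action-
and a delay-transition, action transitions into the same state coincide, and delay
transitions into the same state have the same source. -/
def IsTree {Act : Type} (G : TIOTS Act) : Prop :=
  (∀ p, ¬ Relation.TransGen (plainStep G) p p) ∧
  (∀ p p' p'' a d, G.tr (.plain p) (TAct.act a) (.plain p'') →
      G.tr (.plain p') (TAct.delay d) (.plain p'') → False) ∧
  (∀ p p' p'' a b, G.tr (.plain p) (TAct.act a) (.plain p'') →
      G.tr (.plain p') (TAct.act b) (.plain p'') → p = p' ∧ a = b) ∧
  (∀ p p' p'' d, G.tr (.plain p) (TAct.delay d) (.plain p'') →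
      G.tr (.plain p') (TAct.delay d) (.plain p'') → p = p')

/-- Strategy: a deterministic tree TIOTS in which every plain state enables exactly
the inputs together with a unique component move, the move being a single output or
a nonempty set of delays. -/
def IsStrategy {Act : Type} (G : TIOTS Act) : Prop :=
  WF G ∧ Deterministic G ∧ IsTree G ∧
  ∀ p : G.Sig,
    eb G p = {α | ∃ a ∈ G.I, α = TAct.act a} ∪ mvSet G p ∧
    ((∃ a ∈ G.O, mvSet G p = {TAct.act a}) ∨
      ((mvSet G p).Nonempty ∧ ∀ α ∈ mvSet G p, TAct.isDelay α))

/-- `G` is a partial unfolding of `Q`: a state map preserving `⊥`, `⊤`, plainness,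
the initial state and the transitions. -/
def PartialUnfolding {Act : Type} (G Q : TIOTS Act) : Prop :=
  G.I = Q.I ∧ G.O = Q.O ∧
  ∃ f : G.Sig → Q.Sig,
    St.map f G.init = Q.init ∧
    ∀ (p : G.Sig) (α : TAct Act) (s' : St G.Sig),
      G.tr (.plain p) α s' → Q.tr (.plain (f p)) α (St.map f s')

/-- Strategies contained in `P`: partial unfoldings of `(P^⊥)^⊤`. -/
def stg {Act : Type} (P : TIOTS Act) : Set (TIOTS Act) :=
  {G | IsStrategy G ∧ PartialUnfolding G P.complete}

/-- Affinity: identical alphabets and equal proposed moves after equal traces. -/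
def Affine {Act : Type} (G G' : TIOTS Act) : Prop :=
  G.I = G'.I ∧ G.O = G'.O ∧
  ∀ (w : TWord Act) (p : G.Sig) (p' : G'.Sig),
    Reach G w (.plain p) → Reach G' w (.plain p') → mvSet G p = mvSet G' p'

/-- Aggressiveness order `G ≼ G'` on affine strategies: `G` reaches `⊥` faster and
`⊤` slower than `G'`. -/
def Agg {Act : Type} (G G' : TIOTS Act) : Prop :=
  Affine G G' ∧
  (∀ w, Reach G' w .bot → ∃ w₀, Pref w₀ w ∧ Reach G w₀ .bot) ∧
  (∀ w, Reach G w .top → ∃ w₀, Pref w₀ w ∧ Reach G' w₀ .top)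

/-- Strategy semantics `[P]_s`: upward closure of `stg(P)` w.r.t. `≼`. -/
def ssem {Act : Type} (P : TIOTS Act) : Set (TIOTS Act) :=
  {G' | IsStrategy G' ∧ ∃ G ∈ stg P, Agg G G'}

/-- Strategy disjunction `G + G'` of (affine) strategies: their synchronised
`∨`-product, without further completion. -/
def stratPlus {Act : Type} (G G' : TIOTS Act) : TIOTS Act := rawProd G G' stOr G.I G.O

/-- Isomorphism of TIOTSs. -/
def TIso {Act : Type} (P Q : TIOTS Act) : Prop :=
  P.I = Q.I ∧ P.O = Q.O ∧
  ∃ e : P.Sig ≃ Q.Sig,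
    St.map (fun x => e x) P.init = Q.init ∧
    ∀ s α s', P.tr s α s' ↔ Q.tr (St.map (fun x => e x) s) α (St.map (fun x => e x) s')

/-- Disjunction closure of a set of strategies (strategies are identified up to
isomorphism): least superset closed under `+` of affine pairs. -/
inductive DClos {Act : Type} (S : Set (TIOTS Act)) : TIOTS Act → Prop where
  | base {G} : G ∈ S → DClos S G
  | disj {G G'} : DClos S G → DClos S G' → Affine G G' → DClos S (stratPlus G G')
  | iso {G G'} : DClos S G → TIso G G' → DClos S G'

/-- Disjunction closure `Π⁺` as a set. -/
def dclos {Act : Type} (S : Set (TIOTS Act)) : Set (TIOTS Act) := {G | DClos S G}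

/-- `[P]_s⁺`. -/
def sClos {Act : Type} (P : TIOTS Act) : Set (TIOTS Act) := dclos (ssem P)

/-- Coin strategies: functions from histories to `{0,1}`. -/
abbrev Coin (Act : Type) := TWord Act → Bool

/-- The strategy proposes output `a` at `p`. -/
def proposesA {Act : Type} (G : TIOTS Act) (p : G.Sig) (a : Act) : Prop :=
  TAct.act a ∈ mvSet G p

/-- The strategy proposes delay `d` at `p`. -/
def proposesD {Act : Type} (G : TIOTS Act) (p : G.Sig) (d : Delay) : Prop :=
  TAct.delay d ∈ mvSet G p

/-- Game-state combination for plays (game states carry the history). -/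
def stPlay {Act : Type} {σ₀ σ₁ : Type} (w : TWord Act) :
    St σ₀ → St σ₁ → St (σ₀ × σ₁ × TWord Act)
  | .top, _ => .top
  | _, .top => .top
  | .bot, _ => .bot
  | _, .bot => .bot
  | .plain p, .plain q => .plain (p, q, w)

/-- A component fires `α` if `α` is in its timed alphabet, and stays put otherwise. -/
def stepOrStay {Act : Type} (G : TIOTS Act) (p : G.Sig) (α : TAct Act) (s : St G.Sig) : Prop :=
  (TAct.valid G.A α ∧ G.tr (.plain p) α s) ∨ (¬ TAct.valid G.A α ∧ s = .plain p)

/-- Inputs that fire autonomously at a game state: synchronised inputs and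
independent inputs. -/
def firedInput {Act : Type} (GP GQ : TIOTS Act) (a : Act) : Prop :=
  a ∈ GP.I ∩ GQ.I ∨ (a ∈ GP.I ∪ GQ.I ∧ a ∉ GP.A ∩ GQ.A)

/-- The timed action `α` fires at game state `(p, q)` with history `w`: it is a fired
input, or a prevailing component move (an action prevails over a delay, the common
delays prevail when both propose delays, and the coin `h` resolves ties between two
proposed actions: `false` lets the left strategy win). -/
def fired {Act : Type} (GP GQ : TIOTS Act) (h : Coin Act) (p : GP.Sig) (q : GQ.Sig)
    (w : TWord Act) : TAct Act → Prop
  | TAct.act a =>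
      firedInput GP GQ a ∨
      (proposesA GP p a ∧ ((∃ b, proposesA GQ q b) → h w = false)) ∨
      (proposesA GQ q a ∧ ((∃ b, proposesA GP p b) → h w = true))
  | TAct.delay d => proposesD GP p d ∧ proposesD GQ q d

/-- The play `G_P ∥_h G_Q` of two strategies with composable alphabets against a
coin strategy `h`: a tree TIOTS over game states carrying histories. -/
def play {Act : Type} (GP GQ : TIOTS Act) (h : Coin Act) : TIOTS Act where
  Sig := GP.Sig × GQ.Sig × TWord Act
  I := (GP.I ∪ GQ.I) \ (GP.O ∪ GQ.O)
  O := GP.O ∪ GQ.O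
  init := stPlay [] GP.init GQ.init
  tr := fun s α s' =>
    (∃ p q w, s = St.plain (p, q, w) ∧ fired GP GQ h p q w α ∧
      ∃ (s₀ : St GP.Sig) (s₁ : St GQ.Sig),
        stepOrStay GP p α s₀ ∧ stepOrStay GQ q α s₁ ∧
        s' = stPlay (tcat w [α]) s₀ s₁) ∨
    (s = .bot ∧ TAct.valid (GP.A ∪ GQ.A) α ∧ s' = .bot) ∨
    (s = .top ∧ TAct.isDelay α ∧ s' = .top)

/-- Projection of a timed word onto a sub-alphabet: delete visible actions outside
the sub-alphabet and coalesce adjacent delays. -/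
noncomputable def projW {Act : Type} (A : Set Act) (w : TWord Act) : TWord Act :=
  w.foldr (fun α acc =>
    match α with
    | TAct.act a => if a ∈ A then tcat [TAct.act a] acc else acc
    | TAct.delay d => tcat [TAct.delay d] acc) []


/-! ### Auxiliary infrastructure for the proof -/

section Aux

variable {Act : Type}

@[simp] lemma tcat_nil (w : TWord Act) : tcat w [] = w := by
  unfold tcat
  rcases h : w.getLast? with _ | a
  · simp
  · cases a <;> simp

@[simp] lemma nil_tcat (w : TWord Act) : tcat [] w = w := by
  unfold tcat; simp

lemma tcat_act (a : Act) (w : TWord Act) : tcat [TAct.act a] w = TAct.act a :: w := by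
  unfold tcat; simp

lemma tcat_delay_delay (d e : Delay) (r : TWord Act) :
    tcat [TAct.delay d] (TAct.delay e :: r) = TAct.delay (dsum d e) :: r := by
  unfold tcat; simp

lemma tcat_delay_other (d : Delay) (w : TWord Act) (h : ∀ e r, w ≠ TAct.delay e :: r) :
    tcat [TAct.delay d] w = TAct.delay d :: w := by
  unfold tcat
  match w with
  | [] => simp
  | TAct.act b :: r => simp
  | TAct.delay e :: r => exact absurd rfl (h e r)

lemma tcat_single_ne_nil (α : TAct Act) (w : TWord Act) : tcat [α] w ≠ [] := by
  cases α with
  | act a => rw [tcat_act]; simp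
  | delay d =>
    match w with
    | [] => rw [tcat_delay_other] <;> simp
    | TAct.act b :: r => rw [tcat_delay_other] <;> simp
    | TAct.delay e :: r => rw [tcat_delay_delay]; simp

lemma tcat_ne_nil (u v : TWord Act) (hu : u ≠ []) : tcat u v ≠ [] := by
  unfold tcat
  split
  · simp
  · simp [hu]

lemma tcat_eq_nil {u v : TWord Act} (h : tcat u v = []) : u = [] ∧ v = [] := by
  by_cases hu : u = []
  · subst hu; simp at h; exact ⟨rfl, h⟩
  · exact absurd h (tcat_ne_nil u v hu)

lemma tcat_cons (α : TAct Act) (u v : TWord Act) (hu : u ≠ []) :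
    tcat (α :: u) v = α :: tcat u v := by
  unfold tcat
  have h1 : (α :: u).getLast? = u.getLast? := by
    rcases List.exists_cons_of_ne_nil hu with ⟨x, u', rfl⟩
    simp [List.getLast?_cons_cons]
  rw [h1]
  have h2 : (α :: u).dropLast = α :: u.dropLast := by
    rcases List.exists_cons_of_ne_nil hu with ⟨x, u', rfl⟩
    simp
  split
  · rw [h2]; simp
  · simp

lemma dsum_assoc (d e f : Delay) : dsum (dsum d e) f = dsum d (dsum e f) := by
  simp only [dsum, Subtype.mk.injEq]; ring

lemma tcat_merge (d e : Delay) (v : TWord Act) :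
    tcat [TAct.delay d] (tcat [TAct.delay e] v) = tcat [TAct.delay (dsum d e)] v := by
  rcases v with _ | ⟨β, r⟩
  · simp [tcat_delay_delay]
  cases β with
  | act b =>
    rw [tcat_delay_other e _ (by simp), tcat_delay_delay, tcat_delay_other _ _ (by simp)]
  | delay f =>
    rw [tcat_delay_delay, tcat_delay_delay, tcat_delay_delay, dsum_assoc]

lemma tcat_single_assoc (α : TAct Act) (v w : TWord Act) :
    tcat (tcat [α] v) w = tcat [α] (tcat v w) := by
  cases α with
  | act a =>
    rw [tcat_act]
    rcases v with _ | ⟨β, v'⟩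
    · simp
    · rw [tcat_cons _ _ _ (by simp), tcat_act]
  | delay d =>
    rcases v with _ | ⟨β, v'⟩
    · simp
    cases β with
    | act b =>
      rw [tcat_delay_other _ _ (by simp)]
      rw [tcat_cons _ _ _ (by simp)]
      rcases v' with _ | ⟨γ, v''⟩
      · rw [tcat_act, tcat_delay_other _ _ (by simp)]
      · rw [tcat_cons _ _ _ (by simp), tcat_delay_other _ _ (by simp)]
    | delay e =>
      rcases v' with _ | ⟨γ, v''⟩
      · -- v = [delay e]
        rw [tcat_delay_delay, tcat_merge]
      · -- v = delay e :: γ :: v''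
        rw [tcat_delay_delay, tcat_cons (TAct.delay (dsum d e)) (γ :: v'') w (by simp),
            tcat_cons (TAct.delay e) (γ :: v'') w (by simp), tcat_delay_delay]

lemma tcat_assoc (u v w : TWord Act) : tcat (tcat u v) w = tcat u (tcat v w) := by
  induction u with
  | nil => simp
  | cons α u' ih =>
    rcases eq_or_ne u' [] with rfl | hu'
    · exact tcat_single_assoc α v w
    · rw [tcat_cons _ _ _ hu', tcat_cons _ _ _ (tcat_ne_nil u' v hu'),
          tcat_cons _ _ _ hu', ih]

lemma delay_val_injective {d e : Delay} (h : d.1 = e.1) : d = e := Subtype.ext h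

lemma dsum_ne_left (d e : Delay) : d ≠ dsum d e := by
  intro h
  have h1 := congrArg Subtype.val h
  simp only [dsum] at h1
  have := e.2
  linarith

lemma tcat_cancel_delay {d : Delay} {x y : TWord Act}
    (h : tcat [TAct.delay d] x = tcat [TAct.delay d] y) : x = y := by
  have norm : ∀ z : TWord Act, (z = [] ∧ tcat [TAct.delay d] z = [TAct.delay d]) ∨
      (∃ b r, z = TAct.act b :: r ∧ tcat [TAct.delay d] z = TAct.delay d :: TAct.act b :: r) ∨
      (∃ e r, z = TAct.delay e :: r ∧ tcat [TAct.delay d] z = TAct.delay (dsum d e) :: r) := by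
    intro z
    rcases z with _ | ⟨β, r⟩
    · left; constructor
      · rfl
      · rw [tcat_delay_other _ _ (by simp)]
    cases β with
    | act b =>
      right; left; exact ⟨b, r, rfl, by rw [tcat_delay_other _ _ (by simp)]⟩
    | delay e =>
      right; right; exact ⟨e, r, rfl, by rw [tcat_delay_delay]⟩
  rcases norm x with ⟨rfl, hx⟩ | ⟨b, r, rfl, hx⟩ | ⟨e, r, rfl, hx⟩ <;>
    rcases norm y with ⟨rfl, hy⟩ | ⟨c, r', rfl, hy⟩ | ⟨f, r', rfl, hy⟩ <;>
      simp only [hx, hy] at h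
  all_goals try rfl
  all_goals try (exfalso; simp at h; done)
  all_goals injection h with h1 h2
  all_goals injection h1 with h3
  all_goals try exact absurd h3 (dsum_ne_left _ _)
  all_goals try exact absurd h3.symm (dsum_ne_left _ _)
  all_goals
    (have hval := congrArg Subtype.val h3
     simp only [dsum] at hval
     have he : e = f := delay_val_injective (by linarith)
     rw [he, h2])

/-! #### Well-formed words -/

lemma tcat_of_chain {α : TAct Act} {w : TWord Act} (h : IsTWord (α :: w)) :
    tcat [α] w = α :: w := by
  cases α with
  | act a => exact tcat_act a w
  | delay d =>
    rcases w with _ | ⟨β, r⟩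
    · exact tcat_delay_other _ _ (by simp)
    cases β with
    | act b => exact tcat_delay_other _ _ (by simp)
    | delay e =>
      exfalso
      have := (List.isChain_cons_cons.mp h).1
      exact this ⟨trivial, trivial⟩

lemma validW_nil {A : Set Act} : ValidW A ([] : TWord Act) := ⟨List.isChain_nil, by simp⟩

lemma validW_cons {A : Set Act} {α : TAct Act} {w : TWord Act} (h : ValidW A (α :: w)) :
    TAct.valid A α ∧ ValidW A w :=
  ⟨h.2 _ List.mem_cons_self, h.1.tail, fun β hβ => h.2 β (List.mem_cons_of_mem _ hβ)⟩

lemma validW_tcat_single {A : Set Act} {α : TAct Act} {w : TWord Act}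
    (hα : TAct.valid A α) (hw : ValidW A w) : ValidW A (tcat [α] w) := by
  cases α with
  | act a =>
    rw [tcat_act]
    refine ⟨List.isChain_cons.mpr ⟨fun y _ => ?_, hw.1⟩, ?_⟩
    · simp [TAct.isDelay]
    · intro β hβ
      rcases List.mem_cons.mp hβ with rfl | hβ
      · exact hα
      · exact hw.2 β hβ
  | delay d =>
    rcases w with _ | ⟨β, r⟩
    · rw [tcat_delay_other _ _ (by simp)]
      exact ⟨List.isChain_singleton _, by intro β hβ; simp at hβ; subst hβ; trivial⟩
    cases β with
    | act b =>
      rw [tcat_delay_other _ _ (by simp)]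
      refine ⟨List.isChain_cons_cons.mpr ⟨fun hc => hc.2, hw.1⟩, ?_⟩
      intro γ hγ
      rcases List.mem_cons.mp hγ with rfl | hγ
      · trivial
      · exact hw.2 γ hγ
    | delay e =>
      rw [tcat_delay_delay]
      have h1 := List.isChain_cons.mp hw.1
      refine ⟨List.isChain_cons.mpr ⟨fun y hy => h1.1 y hy, h1.2⟩, ?_⟩
      intro γ hγ
      rcases List.mem_cons.mp hγ with rfl | hγ
      · trivial
      · exact hw.2 γ (List.mem_cons_of_mem _ hγ)

lemma validW_tcat_right {A : Set Act} {v u : TWord Act} (h : ValidW A (tcat v u)) :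
    ValidW A u := by
  unfold tcat at h
  split at h
  next v' d e rest heq =>
    have hsuf : (TAct.delay (dsum d e) :: rest) <:+ (v.dropLast ++ TAct.delay (dsum d e) :: rest) :=
      ⟨v.dropLast, rfl⟩
    have hch : IsTWord (TAct.delay (dsum d e) :: rest) := h.1.suffix hsuf
    have h1 := List.isChain_cons.mp hch
    refine ⟨List.isChain_cons.mpr ⟨fun y hy => h1.1 y hy, h1.2⟩, ?_⟩
    intro γ hγ
    rcases List.mem_cons.mp hγ with rfl | hγ
    · trivial
    · exact h.2 γ (by
        refine List.mem_append.mpr (Or.inr ?_)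
        exact List.mem_cons_of_mem _ hγ)
  next =>
    refine ⟨h.1.suffix ⟨v, rfl⟩, fun γ hγ => h.2 γ (List.mem_append.mpr (Or.inr hγ))⟩

/-! #### Prefix lemmas -/

lemma pref_refl (w : TWord Act) : Pref w w := ⟨[], tcat_nil w⟩

lemma pref_nil (w : TWord Act) : Pref [] w := ⟨w, nil_tcat w⟩

lemma pref_cons {α : TAct Act} {v w : TWord Act} (h : Pref v w) :
    Pref (tcat [α] v) (tcat [α] w) := by
  rcases h with ⟨u, hu⟩
  exact ⟨u, by rw [tcat_single_assoc, hu]⟩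

lemma tcat_eq_single_delay {v u : TWord Act} {d : Delay} (h : tcat v u = [TAct.delay d]) :
    (v = [] ∧ u = [TAct.delay d]) ∨ (v = [TAct.delay d] ∧ u = []) ∨
      ∃ d₁ d₂, v = [TAct.delay d₁] ∧ u = [TAct.delay d₂] ∧ dsum d₁ d₂ = d := by
  unfold tcat at h
  split at h
  next v' d₀ e rest heq =>
    rcases hvd : v.dropLast with _ | ⟨x, vd⟩
    · rw [hvd] at h
      simp at h
      obtain ⟨hde, hrest⟩ := h
      subst hrest
      have hv : v = [TAct.delay d₀] := by
        rcases v with _ | ⟨x, v''⟩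
        · simp at heq
        · rcases v'' with _ | ⟨y, v'''⟩
          · simp at heq; rw [heq]
          · simp [List.dropLast] at hvd
      right; right
      exact ⟨d₀, e, hv, rfl, hde⟩
    · rw [hvd] at h
      exfalso
      have := congrArg List.length h
      simp at this
  next =>
    rcases v with _ | ⟨x, v'⟩
    · simp at h
      exact Or.inl ⟨rfl, h⟩
    · rw [List.cons_append] at h
      injection h with h1 h2
      have := List.append_eq_nil_iff.mp h2
      right; left
      exact ⟨by rw [h1, this.1], this.2⟩

/-! #### Executions -/

variable {T : TIOTS Act}

lemma exec_append {s w t u r : _} (h1 : Exec T s w t) (h2 : Exec T t u r) :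
    Exec T s (tcat w u) r := by
  induction h1 with
  | nil s => rwa [nil_tcat]
  | cons hstep hrest ih => rw [tcat_single_assoc]; exact Exec.cons hstep (ih h2)

lemma exec_nil_inv' {s w t : _} (h : Exec T s w t) (hw : w = []) : s = t := by
  induction h with
  | nil s => rfl
  | cons hstep hrest ih => exact absurd hw (tcat_single_ne_nil _ _)

lemma exec_nil_inv {s t : _} (h : Exec T s [] t) : s = t := exec_nil_inv' h rfl

inductive ExecN (T : TIOTS Act) : ℕ → St T.Sig → TWord Act → St T.Sig → Prop where
  | nil (s : St T.Sig) : ExecN T 0 s [] s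
  | cons {n : ℕ} {s : St T.Sig} {α : TAct Act} {s' : St T.Sig} {w : TWord Act} {s'' : St T.Sig} :
      T.tr s α s' → ExecN T n s' w s'' → ExecN T (n + 1) s (tcat [α] w) s''

lemma execN_exec {n s w t : _} (h : ExecN T n s w t) : Exec T s w t := by
  induction h with
  | nil s => exact .nil s
  | cons h1 h2 ih => exact .cons h1 ih

lemma exec_execN {s w t : _} (h : Exec T s w t) : ∃ n, ExecN T n s w t := by
  induction h with
  | nil s => exact ⟨0, .nil s⟩
  | cons h1 h2 ih => rcases ih with ⟨n, hn⟩; exact ⟨n + 1, .cons h1 hn⟩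

lemma execN_succ_inv {k : ℕ} {s w t : _} (h : ExecN T (k + 1) s w t) :
    ∃ α s' w', T.tr s α s' ∧ ExecN T k s' w' t ∧ w = tcat [α] w' := by
  cases h with
  | cons h1 h2 => exact ⟨_, _, _, h1, h2, rfl⟩

lemma exec_validW {A : Set Act} (hv : ∀ s α s', T.tr s α s' → TAct.valid A α)
    {s w t : _} (h : Exec T s w t) : ValidW A w := by
  induction h with
  | nil s => exact validW_nil
  | cons h1 h2 ih => exact validW_tcat_single (hv _ _ _ h1) ih

lemma pref_trans {a b c : TWord Act} (h1 : Pref a b) (h2 : Pref b c) : Pref a c := by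
  rcases h1 with ⟨x, hx⟩; rcases h2 with ⟨y, hy⟩
  exact ⟨tcat x y, by rw [← tcat_assoc, hx, hy]⟩

/-! #### Facts about completed systems -/

variable {P : TIOTS Act}

lemma complete_tr {s α s'} : P.complete.tr s α s' ↔
    ((P.tr s α s' ∨
      ((∃ p, s = .plain p) ∧ (∃ a ∈ P.I, α = TAct.act a) ∧ ¬ enabled P s α ∧ s' = .bot)) ∨
     ((∃ p, s = .plain p) ∧ TAct.valid P.O α ∧ ¬ enabled (botComplete P) s α ∧ s' = .top)) :=
  Iff.rfl

lemma c_mono {s α s'} (h : P.tr s α s') : P.complete.tr s α s' := Or.inl (Or.inl h)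

lemma c_top (hP : WF P) {α s'} :
    P.complete.tr .top α s' ↔ (TAct.isDelay α ∧ s' = .top) := by
  rw [complete_tr]
  constructor
  · rintro ((h | ⟨⟨p, hp⟩, -⟩) | ⟨⟨p, hp⟩, -⟩)
    · exact (hP.2.2.1 α s').mp h
    · exact nomatch hp
    · exact nomatch hp
  · intro h; exact Or.inl (Or.inl ((hP.2.2.1 α s').mpr h))

lemma c_bot (hP : WF P) {α s'} :
    P.complete.tr .bot α s' ↔ (TAct.valid P.A α ∧ s' = .bot) := by
  rw [complete_tr]
  constructor
  · rintro ((h | ⟨⟨p, hp⟩, -⟩) | ⟨⟨p, hp⟩, -⟩)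
    · exact (hP.2.2.2.1 α s').mp h
    · exact nomatch hp
    · exact nomatch hp
  · intro h; exact Or.inl (Or.inl ((hP.2.2.2.1 α s').mpr h))

lemma c_valid (hP : WF P) {s α s'} (h : P.complete.tr s α s') : TAct.valid P.A α := by
  rcases complete_tr.mp h with (h | ⟨-, ⟨a, ha, rfl⟩, -⟩) | ⟨-, hv, -⟩
  · exact hP.2.1 _ _ _ h
  · exact Or.inl ha
  · cases α with
    | act a => exact Or.inr hv
    | delay d => trivial

lemma c_enab (hP : WF P) (p : P.Sig) (α : TAct Act) (hα : TAct.valid P.A α) :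
    ∃ s', P.complete.tr (.plain p) α s' := by
  by_cases hbe : enabled (botComplete P) (.plain p) α
  · rcases hbe with ⟨s', hs'⟩; exact ⟨s', Or.inl hs'⟩
  · cases α with
    | act a =>
      rcases hα with ha | ha
      · exfalso
        apply hbe
        by_cases he : enabled P (.plain p) (.act a)
        · rcases he with ⟨s', hs'⟩; exact ⟨s', Or.inl hs'⟩
        · exact ⟨.bot, Or.inr ⟨⟨p, rfl⟩, ⟨a, ha, rfl⟩, he, rfl⟩⟩
      · exact ⟨.top, Or.inr ⟨⟨p, rfl⟩, ha, hbe, rfl⟩⟩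
    | delay d => exact ⟨.top, Or.inr ⟨⟨p, rfl⟩, trivial, hbe, rfl⟩⟩

lemma enabled_bot_delay {s : St P.Sig} {d : Delay} :
    enabled (botComplete P) s (.delay d) ↔ enabled P s (.delay d) := by
  constructor
  · rintro ⟨s', h | ⟨-, ⟨a, -, heq⟩, -⟩⟩
    · exact ⟨s', h⟩
    · exact nomatch heq
  · rintro ⟨s', h⟩; exact ⟨s', Or.inl h⟩

lemma c_split (hP : WF P) {s s'} {d e : Delay}
    (h : P.complete.tr s (.delay (dsum d e)) s') :
    ∃ m, P.complete.tr s (.delay d) m ∧ P.complete.tr m (.delay e) s' := by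
  cases s with
  | top =>
    obtain ⟨-, rfl⟩ := (c_top hP).mp h
    exact ⟨.top, (c_top hP).mpr ⟨trivial, rfl⟩, (c_top hP).mpr ⟨trivial, rfl⟩⟩
  | bot =>
    obtain ⟨-, rfl⟩ := (c_bot hP).mp h
    exact ⟨.bot, (c_bot hP).mpr ⟨trivial, rfl⟩, (c_bot hP).mpr ⟨trivial, rfl⟩⟩
  | plain p =>
    rcases complete_tr.mp h with (h | ⟨-, ⟨a, -, heq⟩, -⟩) | ⟨-, -, hne, rfl⟩
    · rcases (hP.2.2.2.2 p d e s').mp h with ⟨m, hm1, hm2⟩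
      exact ⟨m, c_mono hm1, c_mono hm2⟩
    · exact nomatch heq
    · have hne' : ¬ enabled P (.plain p) (.delay (dsum d e)) := by
        rintro ⟨s₀, h₀⟩; exact hne ⟨s₀, Or.inl h₀⟩
      by_cases hd : enabled P (.plain p) (.delay d)
      · rcases hd with ⟨m, hm⟩
        cases m with
        | plain m' =>
          have hem : ¬ enabled P (.plain m') (.delay e) := by
            rintro ⟨s₂, hs₂⟩
            exact hne' ⟨s₂, (hP.2.2.2.2 p d e s₂).mpr ⟨.plain m', hm, hs₂⟩⟩
          have hbm : ¬ enabled (botComplete P) (.plain m') (.delay e) :=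
            fun hc => hem (enabled_bot_delay.mp hc)
          exact ⟨.plain m', c_mono hm, Or.inr ⟨⟨m', rfl⟩, trivial, hbm, rfl⟩⟩
        | bot =>
          exact absurd ⟨.bot, (hP.2.2.2.2 p d e .bot).mpr
            ⟨.bot, hm, (hP.2.2.2.1 (.delay e) .bot).mpr ⟨trivial, rfl⟩⟩⟩ hne'
        | top =>
          exact absurd ⟨.top, (hP.2.2.2.2 p d e .top).mpr
            ⟨.top, hm, (hP.2.2.1 (.delay e) .top).mpr ⟨trivial, rfl⟩⟩⟩ hne'
      · have hbd : ¬ enabled (botComplete P) (.plain p) (.delay d) :=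
          fun hc => hd (enabled_bot_delay.mp hc)
        exact ⟨.top, Or.inr ⟨⟨p, rfl⟩, trivial, hbd, rfl⟩, (c_top hP).mpr ⟨trivial, rfl⟩⟩

lemma chaosRun (hP : WF P) {w : TWord Act} (hw : ValidW P.A w) :
    Exec P.complete .bot w .bot := by
  induction w with
  | nil => exact .nil _
  | cons α w' ih =>
    obtain ⟨hα, hw'⟩ := validW_cons hw
    rw [← tcat_of_chain hw.1]
    exact .cons ((c_bot hP).mpr ⟨hα, rfl⟩) (ih hw')

lemma topStays (hP : WF P) {s w t} (h : Exec P.complete s w t) :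
    s = .top → t = .top ∧ (w = [] ∨ ∃ d, w = [TAct.delay d]) := by
  induction h with
  | nil s => intro hs; exact ⟨hs, Or.inl rfl⟩
  | @cons s α s' w s'' h1 h2 ih =>
    rintro rfl
    obtain ⟨hd, rfl⟩ := (c_top hP).mp h1
    obtain ⟨ht, hw⟩ := ih rfl
    refine ⟨ht, ?_⟩
    cases α with
    | act a => exact hd.elim
    | delay d =>
      rcases hw with rfl | ⟨e, rfl⟩
      · exact Or.inr ⟨d, by rw [tcat_nil]⟩
      · exact Or.inr ⟨dsum d e, by rw [tcat_delay_delay]⟩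

lemma botStays (hP : WF P) {s w t} (h : Exec P.complete s w t) : s = .bot → t = .bot := by
  induction h with
  | nil s => exact id
  | cons h1 h2 ih =>
    rintro rfl
    obtain ⟨-, rfl⟩ := (c_bot hP).mp h1
    exact ih rfl

lemma topRun (hP : WF P) {w : TWord Act} (hw : w = [] ∨ ∃ d, w = [TAct.delay d]) :
    Exec P.complete .top w .top := by
  rcases hw with rfl | ⟨d, rfl⟩
  · exact .nil _
  · rw [show [TAct.delay d] = tcat [TAct.delay d] [] from (tcat_nil _).symm]
    exact .cons ((c_top hP).mpr ⟨trivial, rfl⟩) (.nil _)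

lemma runAll (hP : WF P) : ∀ (u : TWord Act), ValidW P.A u → ∀ p : P.Sig,
    ∃ t u₁ u₂, tcat u₁ u₂ = u ∧ Exec P.complete (.plain p) u₁ t ∧
      ((t = .top ∧ u₂.length < u.length) ∨ u₂ = []) := by
  intro u
  induction u with
  | nil => intro _ p; exact ⟨.plain p, [], [], by simp, .nil _, Or.inr rfl⟩
  | cons α u' ih =>
    intro hu p
    obtain ⟨hα, hu'⟩ := validW_cons hu
    have hc : tcat [α] u' = α :: u' := tcat_of_chain hu.1
    obtain ⟨s', hs'⟩ := c_enab hP p α hα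
    cases s' with
    | plain p' =>
      obtain ⟨t, u₁, u₂, hcat, hex, hcase⟩ := ih hu' p'
      refine ⟨t, tcat [α] u₁, u₂, ?_, .cons hs' hex, ?_⟩
      · rw [tcat_single_assoc, hcat, hc]
      · rcases hcase with ⟨ht, hlen⟩ | rfl
        · exact Or.inl ⟨ht, by simp; omega⟩
        · exact Or.inr rfl
    | bot =>
      refine ⟨.bot, α :: u', [], by simp, ?_, Or.inr rfl⟩
      rw [← hc]; exact .cons hs' (chaosRun hP hu')
    | top =>
      refine ⟨.top, [α], u', hc, ?_, Or.inl ⟨rfl, by simp⟩⟩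
      rw [show [α] = tcat [α] [] from (tcat_nil _).symm]
      exact .cons hs' (.nil _)

lemma followInit (hP : WF P) (u : TWord Act) (hu : ValidW P.A u) :
    ∃ u₁ u₂ t, tcat u₁ u₂ = u ∧ Exec P.complete P.complete.init u₁ t ∧
      (t = .top ∨ u₂ = []) := by
  cases hini : P.complete.init with
  | plain p =>
    obtain ⟨t, u₁, u₂, hcat, hex, hcase⟩ := runAll hP u hu p
    refine ⟨u₁, u₂, t, hcat, hex, ?_⟩
    rcases hcase with ⟨ht, -⟩ | rfl
    · exact Or.inl ht
    · exact Or.inr rfl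
  | bot => exact ⟨u, [], .bot, by simp, chaosRun hP hu, Or.inr rfl⟩
  | top => exact ⟨[], u, .top, by simp, .nil _, Or.inl rfl⟩

lemma lemA (hP : WF P) : ∀ (n : ℕ) (u : TWord Act), u.length ≤ n → ValidW P.A u →
    ∀ v, v ∈ TRset P → tcat v u ∉ TRset P →
      ∃ w₀, Pref w₀ (tcat v u) ∧ w₀ ∈ TMset P ∧ w₀ ∉ TRset P := by
  intro n
  induction n with
  | zero =>
    intro u hlen _ v hv hw
    have : u = [] := List.eq_nil_of_length_eq_zero (Nat.le_zero.mp hlen)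
    subst this
    rw [tcat_nil] at hw
    exact absurd hv hw
  | succ n ih =>
    intro u hlen hu v hv hw
    rcases hv with hvE | hvP
    · exact absurd (Or.inl (exec_append hvE (chaosRun hP hu))) hw
    · rcases hvP with ⟨p, hp⟩
      obtain ⟨t, u₁, u₂, hcat, hex, hcase⟩ := runAll hP u hu p
      rcases hcase with ⟨rfl, hlen2⟩ | rfl
      · have heq : tcat (tcat v u₁) u₂ = tcat v u := by rw [tcat_assoc, hcat]
        have hm : tcat v u₁ ∈ TMset P := exec_append hp hex
        have hpref : Pref (tcat v u₁) (tcat v u) := ⟨u₂, heq⟩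
        by_cases hr : tcat v u₁ ∈ TRset P
        · obtain ⟨w₁, hp1, hp2, hp3⟩ :=
            ih u₂ (by omega) (validW_tcat_right (hcat ▸ hu)) (tcat v u₁) hr (heq ▸ hw)
          exact ⟨w₁, pref_trans (heq ▸ hp1) (pref_refl _), hp2, hp3⟩
        · exact ⟨tcat v u₁, hpref, hm, hr⟩
      · rw [tcat_nil] at hcat
        subst hcat
        have hfull := exec_append hp hex
        cases t with
        | plain q => exact absurd (Or.inr ⟨q, hfull⟩) hw
        | bot => exact absurd (Or.inl hfull) hw
        | top => exact ⟨tcat v u₁, pref_refl _, hfull, hw⟩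

/-! #### `stOr` facts -/

section StOr

variable {σ₀ σ₁ : Type}

@[simp] lemma stOr_bot_left (s₁ : St σ₁) : stOr (.bot : St σ₀) s₁ = .bot := by
  cases s₁ <;> rfl

@[simp] lemma stOr_plain_bot (p : σ₀) : stOr (.plain p) (.bot : St σ₁) = .bot := rfl

@[simp] lemma stOr_bot_right (s₀ : St σ₀) : stOr s₀ (.bot : St σ₁) = .bot := by
  cases s₀ <;> rfl

@[simp] lemma stOr_top_bot : stOr (.top : St σ₀) (.bot : St σ₁) = .bot := rfl

@[simp] lemma stOr_plain_top (p : σ₀) :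
    stOr (.plain p) (.top : St σ₁) = .plain (Sum.inl p) := rfl

@[simp] lemma stOr_top_plain (q : σ₁) :
    stOr (.top : St σ₀) (.plain q) = .plain (Sum.inr (Sum.inl q)) := rfl

@[simp] lemma stOr_top_top : stOr (.top : St σ₀) (.top : St σ₁) = .top := rfl

@[simp] lemma stOr_plain_plain (p : σ₀) (q : σ₁) :
    stOr (.plain p) (.plain q) = .plain (pairSt p q) := rfl

lemma stOr_bot_iff {s₀ : St σ₀} {s₁ : St σ₁} :
    stOr s₀ s₁ = .bot ↔ (s₀ = .bot ∨ s₁ = .bot) := by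
  cases s₀ <;> cases s₁ <;> simp [stOr, pairSt, CState]

lemma stOr_top_iff {s₀ : St σ₀} {s₁ : St σ₁} :
    stOr s₀ s₁ = .top ↔ (s₀ = .top ∧ s₁ = .top) := by
  cases s₀ <;> cases s₁ <;> simp [stOr, pairSt, CState]

lemma stOr_inl_iff {s₀ : St σ₀} {s₁ : St σ₁} {p : σ₀} :
    stOr s₀ s₁ = .plain (Sum.inl p) ↔ (s₀ = .plain p ∧ s₁ = .top) := by
  cases s₀ <;> cases s₁ <;> simp [stOr, pairSt, CState]

lemma stOr_inr_iff {s₀ : St σ₀} {s₁ : St σ₁} {q : σ₁} :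
    stOr s₀ s₁ = .plain (Sum.inr (Sum.inl q)) ↔ (s₀ = .top ∧ s₁ = .plain q) := by
  cases s₀ <;> cases s₁ <;> simp [stOr, pairSt, CState]

lemma stOr_pair_iff {s₀ : St σ₀} {s₁ : St σ₁} {p : σ₀} {q : σ₁} :
    stOr s₀ s₁ = .plain (pairSt p q) ↔ (s₀ = .plain p ∧ s₁ = .plain q) := by
  cases s₀ <;> cases s₁ <;> simp [stOr, pairSt, CState]

lemma embL_stOr (s : St σ₀) : (embL s : St (CState σ₀ σ₁)) = stOr s .top := by
  cases s <;> rfl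

lemma embR_stOr (s : St σ₁) : (embR s : St (CState σ₀ σ₁)) = stOr .top s := by
  cases s <;> rfl

end StOr

/-! #### The disjunction product -/

variable {Q : TIOTS Act}

lemma valid_hA {α : TAct Act} (hA : P.A = Q.A) (h : TAct.valid P.A α) : TAct.valid Q.A α := by
  cases α with
  | act a => exact hA ▸ h
  | delay d => trivial

lemma orC_tr {s α s'} : (orC P Q).tr s α s' ↔
    ((∃ p s₀, s = St.plain (Sum.inl p) ∧ P.complete.tr (.plain p) α s₀ ∧ s' = embL s₀) ∨
     (∃ q s₁, s = St.plain (Sum.inr (Sum.inl q)) ∧ Q.complete.tr (.plain q) α s₁ ∧ s' = embR s₁) ∨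
     (∃ p q, s = St.plain (pairSt p q) ∧
       ((TAct.valid (P.complete.A ∩ Q.complete.A) α ∧
          ∃ s₀ s₁, P.complete.tr (.plain p) α s₀ ∧ Q.complete.tr (.plain q) α s₁ ∧
            s' = stOr s₀ s₁) ∨
        (∃ a, α = TAct.act a ∧ a ∈ P.complete.A \ Q.complete.A ∧
          ∃ s₀, P.complete.tr (.plain p) α s₀ ∧ s' = stOr s₀ (.plain q)) ∨
        (∃ a, α = TAct.act a ∧ a ∈ Q.complete.A \ P.complete.A ∧
          ∃ s₁, Q.complete.tr (.plain q) α s₁ ∧ s' = stOr (.plain p) s₁))) ∨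
     (s = .bot ∧ TAct.valid (P.I ∪ P.O) α ∧ s' = .bot) ∨
     (s = .top ∧ TAct.isDelay α ∧ s' = .top)) := Iff.rfl

lemma r_valid (hP : WF P) (hQ : WF Q) (hA : P.A = Q.A) {s α s'}
    (h : (orC P Q).tr s α s') : TAct.valid P.A α := by
  rcases orC_tr.mp h with ⟨p, s₀, -, h, -⟩ | ⟨q, s₁, -, h, -⟩ | ⟨p, q, -, h3⟩ |
    ⟨-, hv, -⟩ | ⟨-, hd, -⟩
  · exact c_valid hP h
  · exact valid_hA hA.symm (c_valid hQ h)
  · rcases h3 with ⟨hv, -⟩ | ⟨a, rfl, ha, -⟩ | ⟨a, rfl, ha, -⟩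
    · cases α with
      | act a => exact hv.1
      | delay d => trivial
    · exact ha.1
    · exact hA ▸ ha.1
  · exact hv
  · cases α with
    | act a => exact hd.elim
    | delay d => trivial

lemma r_pair (hP : WF P) (hQ : WF Q) (hA : P.A = Q.A) {p q α s₀ s₁}
    (h0 : P.complete.tr (.plain p) α s₀) (h1 : Q.complete.tr (.plain q) α s₁) :
    (orC P Q).tr (.plain (pairSt p q)) α (stOr s₀ s₁) := by
  refine orC_tr.mpr (Or.inr (Or.inr (Or.inl ⟨p, q, rfl, Or.inl ⟨?_, s₀, s₁, h0, h1, rfl⟩⟩)))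
  cases α with
  | act a =>
    have ha := c_valid hP h0
    exact ⟨ha, hA ▸ ha⟩
  | delay d => trivial

lemma r_loneL {p α s₀} (h0 : P.complete.tr (.plain p) α s₀) :
    (orC P Q).tr (.plain (Sum.inl p)) α (stOr s₀ .top) := by
  rw [← embL_stOr]
  exact orC_tr.mpr (Or.inl ⟨p, s₀, rfl, h0, rfl⟩)

lemma r_loneR {q α s₁} (h1 : Q.complete.tr (.plain q) α s₁) :
    (orC P Q).tr (.plain (Sum.inr (Sum.inl q))) α (stOr .top s₁) := by
  rw [← embR_stOr]
  exact orC_tr.mpr (Or.inr (Or.inl ⟨q, s₁, rfl, h1, rfl⟩))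

lemma r_bot {α : TAct Act} (hv : TAct.valid P.A α) : (orC P Q).tr .bot α .bot :=
  orC_tr.mpr (Or.inr (Or.inr (Or.inr (Or.inl ⟨rfl, hv, rfl⟩))))

lemma r_top {d : Delay} : (orC P Q).tr .top (.delay d) .top :=
  orC_tr.mpr (Or.inr (Or.inr (Or.inr (Or.inr ⟨rfl, trivial, rfl⟩))))

lemma compStep (hP : WF P) (hQ : WF Q) (hA : P.A = Q.A) {s₀ α s₀' s₁ s₁'}
    (h0 : P.complete.tr s₀ α s₀') (h1 : Q.complete.tr s₁ α s₁') :
    (orC P Q).tr (stOr s₀ s₁) α (stOr s₀' s₁') := by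
  cases s₀ with
  | bot =>
    obtain ⟨hv, rfl⟩ := (c_bot hP).mp h0
    rw [stOr_bot_left, stOr_bot_left]
    exact r_bot hv
  | plain p =>
    cases s₁ with
    | plain q => exact r_pair hP hQ hA h0 h1
    | bot =>
      obtain ⟨hv, rfl⟩ := (c_bot hQ).mp h1
      rw [stOr_plain_bot, stOr_bot_right]
      exact r_bot (c_valid hP h0)
    | top =>
      obtain ⟨hd, rfl⟩ := (c_top hQ).mp h1
      rw [stOr_plain_top]
      exact r_loneL h0
  | top =>
    obtain ⟨hd, rfl⟩ := (c_top hP).mp h0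
    cases s₁ with
    | plain q =>
      rw [stOr_top_plain]
      exact r_loneR h1
    | bot =>
      obtain ⟨hv, rfl⟩ := (c_bot hQ).mp h1
      rw [stOr_top_bot]
      refine r_bot ?_
      cases α with
      | act a => exact hd.elim
      | delay d => trivial
    | top =>
      obtain ⟨hd', rfl⟩ := (c_top hQ).mp h1
      cases α with
      | act a => exact hd.elim
      | delay d =>
        rw [stOr_top_top]
        exact r_top

lemma enR (hP : WF P) (hQ : WF Q) (hA : P.A = Q.A)
    (c : CState P.complete.Sig Q.complete.Sig) (α : TAct Act) (hα : TAct.valid P.A α) :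
    ∃ s', (orC P Q).tr (.plain c) α s' := by
  rcases c with p | q | ⟨p, q⟩
  · obtain ⟨s₀, h⟩ := c_enab hP p α hα
    exact ⟨stOr s₀ .top, r_loneL h⟩
  · obtain ⟨s₁, h⟩ := c_enab hQ q α (valid_hA hA hα)
    exact ⟨stOr .top s₁, r_loneR h⟩
  · obtain ⟨s₀, h0⟩ := c_enab hP p α hα
    obtain ⟨s₁, h1⟩ := c_enab hQ q α (valid_hA hA hα)
    exact ⟨stOr s₀ s₁, r_pair hP hQ hA h0 h1⟩

lemma collapse_tr (hP : WF P) (hQ : WF Q) (hA : P.A = Q.A) {s α s'} :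
    (orC P Q).complete.tr s α s' ↔ (orC P Q).tr s α s' := by
  constructor
  · intro h
    rcases complete_tr.mp h with (h | ⟨⟨c, rfl⟩, ⟨a, ha, rfl⟩, hne, -⟩) | ⟨⟨c, rfl⟩, hv, hne, -⟩
    · exact h
    · exact absurd (enR hP hQ hA c (TAct.act a) (show TAct.valid P.A (TAct.act a) from Or.inl ha)) hne
    · refine absurd ?_ hne
      have hvA : TAct.valid P.A α := by
        cases α with
        | act a => exact Or.inr hv
        | delay d => trivial
      obtain ⟨s'', h''⟩ := enR hP hQ hA c α hvA
      exact ⟨s'', Or.inl h''⟩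
  · exact c_mono

lemma collapse_exec_mp (hP : WF P) (hQ : WF Q) (hA : P.A = Q.A) {s w t}
    (h : Exec (orC P Q).complete s w t) : Exec (orC P Q) s w t := by
  induction h with
  | nil s => exact Exec.nil (show St (orC P Q).Sig from s)
  | cons h1 h2 ih => exact .cons ((collapse_tr hP hQ hA).mp h1) ih

lemma collapse_exec_mpr (hP : WF P) (hQ : WF Q) (hA : P.A = Q.A)
    {s : St (orC P Q).Sig} {w : TWord Act} {t : St (orC P Q).Sig}
    (h : Exec (orC P Q) s w t) : Exec (orC P Q).complete s w t := by
  induction h with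
  | nil s => exact Exec.nil (show St (orC P Q).complete.Sig from s)
  | cons h1 h2 ih => exact .cons ((collapse_tr hP hQ hA).mpr h1) ih

lemma r_top_stays {s w t} (h : Exec (orC P Q) s w t) :
    s = .top → t = .top ∧ (w = [] ∨ ∃ d, w = [TAct.delay d]) := by
  induction h with
  | nil s => intro hs; exact ⟨hs, Or.inl rfl⟩
  | @cons s α s' w s'' h1 h2 ih =>
    rintro rfl
    rcases orC_tr.mp h1 with ⟨p, s₀, hc, -⟩ | ⟨q, s₁, hc, -⟩ | ⟨p, q, hc, -⟩ |
      ⟨hc, -⟩ | ⟨-, hd, rfl⟩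
    · exact nomatch hc
    · exact nomatch hc
    · exact nomatch hc
    · exact nomatch hc
    · obtain ⟨ht, hw⟩ := ih rfl
      refine ⟨ht, ?_⟩
      cases α with
      | act a => exact hd.elim
      | delay d =>
        rcases hw with rfl | ⟨e, rfl⟩
        · exact Or.inr ⟨d, by rw [tcat_nil]⟩
        · exact Or.inr ⟨dsum d e, by rw [tcat_delay_delay]⟩

lemma r_bot_stays {s w t} (h : Exec (orC P Q) s w t) : s = .bot → t = .bot := by
  induction h with
  | nil s => exact id
  | @cons s α s' w s'' h1 h2 ih =>
    rintro rfl
    rcases orC_tr.mp h1 with ⟨p, s₀, hc, -⟩ | ⟨q, s₁, hc, -⟩ | ⟨p, q, hc, -⟩ |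
      ⟨-, -, rfl⟩ | ⟨hc, -⟩
    · exact nomatch hc
    · exact nomatch hc
    · exact nomatch hc
    · exact ih rfl
    · exact nomatch hc

lemma B1T (hP : WF P) (hQ : WF Q) (hA : P.A = Q.A) {s₀ w t₀}
    (h : Exec P.complete s₀ w t₀) :
    Exec (orC P Q) (stOr s₀ .top) w (stOr t₀ .top) := by
  induction h with
  | nil s => exact .nil _
  | @cons s α s' w' s'' h1 h2 ih =>
    cases s with
    | plain p => exact .cons (r_loneL h1) ih
    | bot =>
      obtain ⟨hv, rfl⟩ := (c_bot hP).mp h1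
      exact .cons (show (orC P Q).tr (stOr (.bot : St P.complete.Sig) .top) α
        (stOr (.bot : St P.complete.Sig) .top) from r_bot hv) ih
    | top =>
      obtain ⟨hd, rfl⟩ := (c_top hP).mp h1
      cases α with
      | act a => exact hd.elim
      | delay d =>
        exact .cons (show (orC P Q).tr (stOr (.top : St P.complete.Sig) .top) (.delay d)
          (stOr (.top : St P.complete.Sig) .top) from r_top) ih

lemma tcat_delay_head (d : Delay) (X : TWord Act) :
    ∃ d' r, tcat [TAct.delay d] X = TAct.delay d' :: r := by
  rcases X with _ | ⟨β, r⟩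
  · exact ⟨d, [], by rw [tcat_delay_other _ _ (by simp)]⟩
  cases β with
  | act b => exact ⟨d, _, by rw [tcat_delay_other _ _ (by simp)]⟩
  | delay e => exact ⟨dsum d e, r, by rw [tcat_delay_delay]⟩

lemma syncRun (hP : WF P) (hQ : WF Q) (hA : P.A = Q.A) :
    ∀ N n₀ n₁, n₀ + n₁ ≤ N → ∀ s₀ w t₀, ExecN P.complete n₀ s₀ w t₀ →
      ∀ s₁ w₁ u t₁, ExecN Q.complete n₁ s₁ w₁ t₁ → tcat w₁ u = w →
        (t₁ = .top ∨ u = []) → Exec (orC P Q) (stOr s₀ s₁) w (stOr t₀ t₁) := by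
  intro N
  induction N with
  | zero =>
    intro n₀ n₁ hle s₀ w t₀ h0 s₁ w₁ u t₁ h1 hcat hdisj
    have hn₀ : n₀ = 0 := by omega
    have hn₁ : n₁ = 0 := by omega
    subst hn₀; subst hn₁
    cases h0 with
    | nil =>
      cases h1 with
      | nil => exact .nil _
  | succ N ihN =>
    intro n₀ n₁ hle s₀ w t₀ h0 s₁ w₁ u t₁ h1 hcat hdisj
    cases n₁ with
    | zero =>
      cases h1 with
      | nil =>
        rw [nil_tcat] at hcat
        subst hcat
        rcases hdisj with rfl | rfl
        · exact B1T hP hQ hA (execN_exec h0)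
        · have h00 : s₀ = t₀ := exec_nil_inv (execN_exec h0)
          rw [h00]
          exact .nil _
    | succ k =>
      obtain ⟨α₁, s₁', r₁, hq, h1', rfl⟩ := execN_succ_inv h1
      cases n₀ with
      | zero =>
        cases h0 with
        | nil => exact absurd (tcat_eq_nil hcat).1 (tcat_single_ne_nil _ _)
      | succ m =>
        obtain ⟨α₀, s₀', r₀, hp, h0', rfl⟩ := execN_succ_inv h0
        have hkey : tcat [α₀] r₀ = tcat [α₁] (tcat r₁ u) := by
          rw [← hcat, tcat_assoc]
        cases α₀ with
        | act a =>
          cases α₁ with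
          | act b =>
            rw [tcat_act, tcat_act] at hkey
            injection hkey with hab hr
            injection hab with hab'
            subst hab'
            exact .cons (compStep hP hQ hA hp hq)
              (ihN m k (by omega) _ _ _ h0' _ _ u _ h1' hr.symm hdisj)
          | delay g =>
            exfalso
            obtain ⟨d', r, hdr⟩ := tcat_delay_head g (tcat r₁ u)
            rw [tcat_act, hdr] at hkey
            injection hkey with hab
            exact nomatch hab
        | delay g₀ =>
          cases α₁ with
          | act b =>
            exfalso
            obtain ⟨d', r, hdr⟩ := tcat_delay_head g₀ r₀
            rw [tcat_act, hdr] at hkey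
            injection hkey with hab
            exact nomatch hab
          | delay g₁ =>
            rcases lt_trichotomy g₀.1 g₁.1 with hlt | heq | hgt
            · -- split Q's step
              set e : Delay := ⟨g₁.1 - g₀.1, by linarith⟩ with he
              have hg : dsum g₀ e = g₁ := delay_val_injective (by simp [dsum, he])
              rw [← hg] at hq
              obtain ⟨mid, hq1, hq2⟩ := c_split hQ hq
              have h1'' : ExecN Q.complete (k + 1) mid (tcat [TAct.delay e] r₁) t₁ :=
                .cons hq2 h1'
              have hkey2 : tcat [TAct.delay g₀] r₀ =
                  tcat [TAct.delay g₀] (tcat [TAct.delay e] (tcat r₁ u)) := by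
                rw [tcat_merge, hg]; exact hkey
              have hr : r₀ = tcat (tcat [TAct.delay e] r₁) u := by
                rw [tcat_cancel_delay hkey2, ← tcat_single_assoc]
              exact .cons (compStep hP hQ hA hp hq1)
                (ihN m (k + 1) (by omega) _ _ _ h0' _ _ u _ h1'' hr.symm hdisj)
            · have hg : g₀ = g₁ := delay_val_injective heq
              subst hg
              have hr := tcat_cancel_delay hkey
              exact .cons (compStep hP hQ hA hp hq)
                (ihN m k (by omega) _ _ _ h0' _ _ u _ h1' hr.symm hdisj)
            · -- split P's step
              set e : Delay := ⟨g₀.1 - g₁.1, by linarith⟩ with he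
              have hg : dsum g₁ e = g₀ := delay_val_injective (by simp [dsum, he])
              rw [← hg] at hp
              obtain ⟨mid, hp1, hp2⟩ := c_split hP hp
              have h0'' : ExecN P.complete (m + 1) mid (tcat [TAct.delay e] r₀) t₀ :=
                .cons hp2 h0'
              have hkey2 : tcat [TAct.delay g₁] (tcat [TAct.delay e] r₀) =
                  tcat [TAct.delay g₁] (tcat r₁ u) := by
                rw [tcat_merge, hg]; exact hkey
              have hr := tcat_cancel_delay hkey2
              have hw : tcat [TAct.delay g₀] r₀ =
                  tcat [TAct.delay g₁] (tcat [TAct.delay e] r₀) := by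
                rw [tcat_merge, hg]
              rw [hw]
              exact .cons (compStep hP hQ hA hp1 hq)
                (ihN (m + 1) k (by omega) _ _ _ h0'' _ _ u _ h1' hr.symm hdisj)

lemma validW_hA {w : TWord Act} (hA : P.A = Q.A) (h : ValidW P.A w) : ValidW Q.A w :=
  ⟨h.1, fun α hα => valid_hA hA (h.2 α hα)⟩

lemma extendTop (hP : WF P) {s v w u} (h : Exec P.complete s v .top) (hcat : tcat v u = w)
    (hw : w = [] ∨ ∃ d, w = [TAct.delay d]) : Exec P.complete s w .top := by
  rcases hw with rfl | ⟨d, rfl⟩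
  · obtain ⟨hv, -⟩ := tcat_eq_nil hcat
    subst hv; exact h
  · rcases tcat_eq_single_delay hcat with ⟨rfl, -⟩ | ⟨rfl, -⟩ | ⟨d₁, d₂, rfl, rfl, hd⟩
    · rw [exec_nil_inv h]
      exact topRun hP (Or.inr ⟨d, rfl⟩)
    · exact h
    · have h2 : Exec P.complete .top [TAct.delay d₂] .top := topRun hP (Or.inr ⟨d₂, rfl⟩)
      have h3 := exec_append h h2
      rwa [tcat_delay_delay, hd] at h3

def OrPost (P Q : TIOTS Act) (s₀ : St P.complete.Sig) (s₁ : St Q.complete.Sig)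
    (w : TWord Act) (t : St (orC P Q).Sig) : Prop :=
  (∃ p q, t = .plain (pairSt p q) ∧ Exec P.complete s₀ w (.plain p) ∧
      Exec Q.complete s₁ w (.plain q)) ∨
  (∃ p, t = .plain (Sum.inl p) ∧ Exec P.complete s₀ w (.plain p)) ∨
  (∃ q, t = .plain (Sum.inr (Sum.inl q)) ∧ Exec Q.complete s₁ w (.plain q)) ∨
  (t = .bot ∧ (Exec P.complete s₀ w .bot ∨ Exec Q.complete s₁ w .bot)) ∨
  (t = .top ∧ ((Exec P.complete s₀ w .top ∧ ∃ v, Pref v w ∧ Exec Q.complete s₁ v .top) ∨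
               (Exec Q.complete s₁ w .top ∧ ∃ v, Pref v w ∧ Exec P.complete s₀ v .top)))

lemma decomp (hP : WF P) (hQ : WF Q) (hA : P.A = Q.A) :
    ∀ {s w t}, Exec (orC P Q) s w t → ∀ s₀ s₁, s = stOr s₀ s₁ → OrPost P Q s₀ s₁ w t := by
  intro s w t h
  induction h with
  | nil s =>
    intro s₀ s₁ hs
    subst hs
    unfold OrPost
    cases s₀ with
    | plain p =>
      cases s₁ with
      | plain q => exact Or.inl ⟨p, q, stOr_plain_plain p q, .nil _, .nil _⟩
      | bot => exact Or.inr (Or.inr (Or.inr (Or.inl ⟨stOr_plain_bot p, Or.inr (.nil _)⟩)))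
      | top => exact Or.inr (Or.inl ⟨p, stOr_plain_top p, .nil _⟩)
    | bot =>
      exact Or.inr (Or.inr (Or.inr (Or.inl ⟨stOr_bot_left s₁, Or.inl (.nil _)⟩)))
    | top =>
      cases s₁ with
      | plain q => exact Or.inr (Or.inr (Or.inl ⟨q, stOr_top_plain q, .nil _⟩))
      | bot => exact Or.inr (Or.inr (Or.inr (Or.inl ⟨stOr_top_bot, Or.inr (.nil _)⟩)))
      | top =>
        exact Or.inr (Or.inr (Or.inr (Or.inr ⟨stOr_top_top,
          Or.inl ⟨.nil _, [], pref_nil _, .nil _⟩⟩)))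
  | @cons s α s' w' t h1 h2 ih =>
    intro s₀ s₁ hs
    subst hs
    have hfull : Exec (orC P Q) (stOr s₀ s₁) (tcat [α] w') t := .cons h1 h2
    unfold OrPost
    cases s₀ with
    | bot =>
      rw [stOr_bot_left] at hfull
      have hb := r_bot_stays hfull rfl
      have hv : ValidW P.A (tcat [α] w') :=
        exec_validW (fun _ _ _ hh => r_valid hP hQ hA hh) hfull
      exact Or.inr (Or.inr (Or.inr (Or.inl ⟨hb, Or.inl (chaosRun hP hv)⟩)))
    | plain p =>
      cases s₁ with
      | bot =>
        rw [stOr_plain_bot] at hfull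
        have hb := r_bot_stays hfull rfl
        have hv : ValidW P.A (tcat [α] w') :=
          exec_validW (fun _ _ _ hh => r_valid hP hQ hA hh) hfull
        exact Or.inr (Or.inr (Or.inr (Or.inl ⟨hb, Or.inr (chaosRun hQ (validW_hA hA hv))⟩)))
      | top =>
        -- lone left
        rw [stOr_plain_top] at h1
        rcases orC_tr.mp h1 with ⟨p', s₀', hc, hp, rfl⟩ | ⟨q', s₁', hc, -⟩ |
          ⟨p', q', hc, -⟩ | ⟨hc, -⟩ | ⟨hc, -⟩
        · injection hc with hc
          have hpp : p = p' := by
            have := hc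
            simp [CState] at this
            exact this
          subst hpp
          have post := ih s₀' .top (embL_stOr s₀')
          unfold OrPost at post
          rcases post with ⟨p₂, q₂, ht, hP2, hQ2⟩ | ⟨p₂, ht, hP2⟩ | ⟨q₂, ht, hQ2⟩ |
            ⟨ht, hor⟩ | ⟨ht, hor⟩
          · obtain ⟨hcontra, -⟩ := topStays hQ hQ2 rfl
            exact nomatch hcontra
          · exact Or.inr (Or.inl ⟨p₂, ht, .cons hp hP2⟩)
          · obtain ⟨hcontra, -⟩ := topStays hQ hQ2 rfl
            exact nomatch hcontra
          · rcases hor with hP2 | hQ2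
            · exact Or.inr (Or.inr (Or.inr (Or.inl ⟨ht, Or.inl (.cons hp hP2)⟩)))
            · exact absurd (topStays hQ hQ2 rfl).1 (by simp)
          · rcases hor with ⟨hP2, -⟩ | ⟨hQ2, v, hpref, hPv⟩
            · exact Or.inr (Or.inr (Or.inr (Or.inr ⟨ht,
                Or.inl ⟨.cons hp hP2, [], pref_nil _, .nil _⟩⟩)))
            · obtain ⟨-, hw'⟩ := topStays hQ hQ2 rfl
              obtain ⟨u, hu⟩ := hpref
              have hPfull : Exec P.complete s₀' w' .top := extendTop hP hPv hu hw'
              exact Or.inr (Or.inr (Or.inr (Or.inr ⟨ht,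
                Or.inl ⟨.cons hp hPfull, [], pref_nil _, .nil _⟩⟩)))
        · exfalso; cases hc
        · exfalso; cases hc
        · exact nomatch hc
        · exact nomatch hc
      | plain q =>
        -- pair
        rw [stOr_plain_plain] at h1
        rcases orC_tr.mp h1 with ⟨p', s₀', hc, -⟩ | ⟨q', s₁', hc, -⟩ |
          ⟨p', q', hc, hsub⟩ | ⟨hc, -⟩ | ⟨hc, -⟩
        · exfalso; cases hc
        · exfalso; cases hc
        · have hpq : p = p' ∧ q = q' := by
            injection hc with hc
            simpa [pairSt, CState] using hc
          obtain ⟨rfl, rfl⟩ := (by exact hpq : p = p' ∧ q = q')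
          rcases hsub with ⟨hv, s₀', s₁', hp, hq, rfl⟩ | ⟨a, rfl, ha, -⟩ | ⟨a, rfl, ha, -⟩
          · have post := ih s₀' s₁' rfl
            unfold OrPost at post
            rcases post with ⟨p₂, q₂, ht, hP2, hQ2⟩ | ⟨p₂, ht, hP2⟩ | ⟨q₂, ht, hQ2⟩ |
              ⟨ht, hor⟩ | ⟨ht, hor⟩
            · exact Or.inl ⟨p₂, q₂, ht, .cons hp hP2, .cons hq hQ2⟩
            · exact Or.inr (Or.inl ⟨p₂, ht, .cons hp hP2⟩)
            · exact Or.inr (Or.inr (Or.inl ⟨q₂, ht, .cons hq hQ2⟩))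
            · exact Or.inr (Or.inr (Or.inr (Or.inl ⟨ht,
                hor.imp (fun hh => .cons hp hh) (fun hh => .cons hq hh)⟩)))
            · refine Or.inr (Or.inr (Or.inr (Or.inr ⟨ht, hor.imp ?_ ?_⟩)))
              · rintro ⟨hf, v, hpref, hv'⟩
                exact ⟨.cons hp hf, tcat [α] v, pref_cons hpref, .cons hq hv'⟩
              · rintro ⟨hf, v, hpref, hv'⟩
                exact ⟨.cons hq hf, tcat [α] v, pref_cons hpref, .cons hp hv'⟩
          · exact absurd (show a ∈ Q.A from hA ▸ ha.1) ha.2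
          · exact absurd (show a ∈ P.A by rw [hA]; exact ha.1) ha.2
        · exact nomatch hc
        · exact nomatch hc
    | top =>
      cases s₁ with
      | bot =>
        rw [stOr_top_bot] at hfull
        have hb := r_bot_stays hfull rfl
        have hv : ValidW P.A (tcat [α] w') :=
          exec_validW (fun _ _ _ hh => r_valid hP hQ hA hh) hfull
        exact Or.inr (Or.inr (Or.inr (Or.inl ⟨hb, Or.inr (chaosRun hQ (validW_hA hA hv))⟩)))
      | top =>
        rw [stOr_top_top] at hfull
        obtain ⟨ht, hw⟩ := r_top_stays hfull rfl
        exact Or.inr (Or.inr (Or.inr (Or.inr ⟨ht,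
          Or.inl ⟨topRun hP hw, [], pref_nil _, .nil _⟩⟩)))
      | plain q =>
        -- lone right
        rw [stOr_top_plain] at h1
        rcases orC_tr.mp h1 with ⟨p', s₀', hc, -⟩ | ⟨q', s₁', hc, hq, rfl⟩ |
          ⟨p', q', hc, -⟩ | ⟨hc, -⟩ | ⟨hc, -⟩
        · exfalso; cases hc
        · injection hc with hc
          have hqq : q = q' := by
            have := hc
            simp [CState] at this
            exact this
          subst hqq
          have post := ih .top s₁' (embR_stOr s₁')
          unfold OrPost at post
          rcases post with ⟨p₂, q₂, ht, hP2, hQ2⟩ | ⟨p₂, ht, hP2⟩ | ⟨q₂, ht, hQ2⟩ |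
            ⟨ht, hor⟩ | ⟨ht, hor⟩
          · obtain ⟨hcontra, -⟩ := topStays hP hP2 rfl
            exact nomatch hcontra
          · obtain ⟨hcontra, -⟩ := topStays hP hP2 rfl
            exact nomatch hcontra
          · exact Or.inr (Or.inr (Or.inl ⟨q₂, ht, .cons hq hQ2⟩))
          · rcases hor with hP2 | hQ2
            · exact absurd (topStays hP hP2 rfl).1 (by simp)
            · exact Or.inr (Or.inr (Or.inr (Or.inl ⟨ht, Or.inr (.cons hq hQ2)⟩)))
          · rcases hor with ⟨hP2, v, hpref, hQv⟩ | ⟨hQ2, -⟩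
            · obtain ⟨-, hw'⟩ := topStays hP hP2 rfl
              obtain ⟨u, hu⟩ := hpref
              have hQfull : Exec Q.complete s₁' w' .top := extendTop hQ hQv hu hw'
              exact Or.inr (Or.inr (Or.inr (Or.inr ⟨ht,
                Or.inr ⟨.cons hq hQfull, [], pref_nil _, .nil _⟩⟩)))
            · exact Or.inr (Or.inr (Or.inr (Or.inr ⟨ht,
                Or.inr ⟨.cons hq hQ2, [], pref_nil _, .nil _⟩⟩)))
        · exfalso; cases hc
        · exact nomatch hc
        · exact nomatch hc

def cswap {σ₀ σ₁ : Type} : St (CState σ₀ σ₁) → St (CState σ₁ σ₀) :=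
  St.map (fun c => match c with
    | .inl p => .inr (.inl p)
    | .inr (.inl q) => .inl q
    | .inr (.inr pq) => .inr (.inr (pq.2, pq.1)))

lemma cswap_stOr {σ₀ σ₁ : Type} (s₀ : St σ₀) (s₁ : St σ₁) :
    cswap (stOr s₀ s₁) = stOr s₁ s₀ := by
  cases s₀ <;> cases s₁ <;> rfl

lemma cswap_embL {σ₀ σ₁ : Type} (s : St σ₀) :
    cswap (embL (σ₁ := σ₁) s) = embR s := by cases s <;> rfl

lemma cswap_embR {σ₀ σ₁ : Type} (s : St σ₁) :
    cswap (embR (σ₀ := σ₀) s) = embL s := by cases s <;> rfl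

lemma swap_tr (hA : P.A = Q.A) {s α s'} (h : (orC P Q).tr s α s') :
    (orC Q P).tr (cswap s) α (cswap s') := by
  rcases orC_tr.mp h with ⟨p, s₀, rfl, hp, rfl⟩ | ⟨q, s₁, rfl, hq, rfl⟩ |
    ⟨p, q, rfl, hsub⟩ | ⟨rfl, hv, rfl⟩ | ⟨rfl, hd, rfl⟩
  · exact orC_tr.mpr (Or.inr (Or.inl ⟨p, s₀, rfl, hp, cswap_embL s₀⟩))
  · exact orC_tr.mpr (Or.inl ⟨q, s₁, rfl, hq, cswap_embR s₁⟩)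
  · refine orC_tr.mpr (Or.inr (Or.inr (Or.inl ⟨q, p, rfl, ?_⟩)))
    rcases hsub with ⟨hv, s₀, s₁, hp, hq, rfl⟩ | ⟨a, rfl, ha, s₀, hp, rfl⟩ |
      ⟨a, rfl, ha, s₁, hq, rfl⟩
    · refine Or.inl ⟨?_, s₁, s₀, hq, hp, cswap_stOr s₀ s₁⟩
      cases α with
      | act a => exact ⟨hv.2, hv.1⟩
      | delay d => trivial
    · exact Or.inr (Or.inr ⟨a, rfl, ha, s₀, hp, cswap_stOr s₀ (.plain q)⟩)
    · exact Or.inr (Or.inl ⟨a, rfl, ha, s₁, hq, cswap_stOr (.plain p) s₁⟩)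
  · exact orC_tr.mpr (Or.inr (Or.inr (Or.inr (Or.inl
      ⟨rfl, show TAct.valid Q.A α from valid_hA hA hv, rfl⟩))))
  · exact orC_tr.mpr (Or.inr (Or.inr (Or.inr (Or.inr ⟨rfl, hd, rfl⟩))))

lemma swap_exec (hA : P.A = Q.A) {s w t} (h : Exec (orC P Q) s w t) :
    Exec (orC Q P) (cswap s) w (cswap t) := by
  induction h with
  | nil s => exact .nil _
  | cons h1 h2 ih => exact .cons (swap_tr hA h1) ih

lemma buildRun (hP : WF P) (hQ : WF Q) (hA : P.A = Q.A) {w t₀}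
    (h : Exec P.complete P.complete.init w t₀) :
    ∃ t₁, Exec (orC P Q) (stOr P.complete.init Q.complete.init) w (stOr t₀ t₁) := by
  have hval : ValidW P.A w := exec_validW (fun _ _ _ hh => c_valid hP hh) h
  obtain ⟨u₁, u₂, t, hcat, hex, hcase⟩ := followInit hQ w (validW_hA hA hval)
  obtain ⟨n₀, hn₀⟩ := exec_execN h
  obtain ⟨n₁, hn₁⟩ := exec_execN hex
  rcases hcase with rfl | rfl
  · exact ⟨.top, syncRun hP hQ hA (n₀ + n₁) n₀ n₁ le_rfl _ _ _ hn₀ _ _ u₂ _ hn₁ hcat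
      (Or.inl rfl)⟩
  · rw [tcat_nil] at hcat
    subst hcat
    exact ⟨t, syncRun hP hQ hA (n₀ + n₁) n₀ n₁ le_rfl _ _ _ hn₀ _ _ [] _ hn₁ (tcat_nil _)
      (Or.inr rfl)⟩

lemma buildRunTop (hP : WF P) (hQ : WF Q) (hA : P.A = Q.A) {w w₁ u}
    (h : Exec P.complete P.complete.init w .top)
    (h1 : Exec Q.complete Q.complete.init w₁ .top) (hcat : tcat w₁ u = w) :
    Exec (orC P Q) (stOr P.complete.init Q.complete.init) w .top := by
  obtain ⟨n₀, hn₀⟩ := exec_execN h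
  obtain ⟨n₁, hn₁⟩ := exec_execN h1
  have hr := syncRun hP hQ hA (n₀ + n₁) n₀ n₁ le_rfl _ _ _ hn₀ _ _ u _ hn₁ hcat (Or.inl rfl)
  rwa [stOr_top_top] at hr

end Aux

/-- Triple-trace structure of the disjunction. -/
theorem traces_disjunction {Act : Type} (P₀ P₁ : TIOTS Act) (h₀ : WF P₀) (h₁ : WF P₁)
    (hI : P₀.I = P₁.I) (hO : P₀.O = P₁.O) :
    (orC P₀ P₁).I = P₀.I ∧
    (orC P₀ P₁).O = P₀.O ∧
    TEset (orC P₀ P₁) = TEset P₀ ∪ TEset P₁ ∧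
    TRset (orC P₀ P₁) = TRset P₀ ∪ TRset P₁ ∧
    TTset (orC P₀ P₁) =
      TRset P₀ ∪ TRset P₁ ∪
        ExtDelay
          {w | (w ∈ TTset P₀ \ TRset P₀ ∧ ∃ w₀, Pref w₀ w ∧ w₀ ∈ TTset P₁ \ TRset P₁) ∨
               (w ∈ TTset P₁ \ TRset P₁ ∧ ∃ w₀, Pref w₀ w ∧ w₀ ∈ TTset P₀ \ TRset P₀)} := by
  have hA : P₀.A = P₁.A := by unfold TIOTS.A; rw [hI, hO]
  have hA' : P₁.A = P₀.A := hA.symm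
  have hreach : ∀ {w : TWord Act} {sv : St (orC P₀ P₁).Sig},
      Reach (orC P₀ P₁).complete w sv ↔
        Exec (orC P₀ P₁) (stOr P₀.complete.init P₁.complete.init) w sv := by
    intro w sv
    exact ⟨fun h => collapse_exec_mp h₀ h₁ hA h, fun h => collapse_exec_mpr h₀ h₁ hA h⟩
  have hdec : ∀ {w : TWord Act} {sv : St (orC P₀ P₁).Sig}, Reach (orC P₀ P₁).complete w sv →
      OrPost P₀ P₁ P₀.complete.init P₁.complete.init w sv :=
    fun h => decomp h₀ h₁ hA (hreach.mp h) _ _ rfl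
  have hswapIn : ∀ {w : TWord Act} {t₀ : St P₁.complete.Sig} {t₁ : St P₀.complete.Sig},
      Exec (orC P₁ P₀) (stOr P₁.complete.init P₀.complete.init) w (stOr t₀ t₁) →
      Reach (orC P₀ P₁).complete w (stOr t₁ t₀) := by
    intro w t₀ t₁ h
    have h2 := swap_exec hA' h
    rw [cswap_stOr, cswap_stOr] at h2
    exact hreach.mpr h2
  have hTE : TEset (orC P₀ P₁) = TEset P₀ ∪ TEset P₁ := by
    ext w
    constructor
    · intro hw
      have post := hdec hw
      unfold OrPost at post
      rcases post with ⟨p, q, ht, -, -⟩ | ⟨p, ht, -⟩ | ⟨q, ht, -⟩ | ⟨-, hor⟩ | ⟨ht, -⟩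
      · exact nomatch ht
      · exact nomatch ht
      · exact nomatch ht
      · exact hor
      · exact nomatch ht
    · intro hw
      rcases hw with hw | hw
      · obtain ⟨t₁, hrun⟩ := buildRun h₀ h₁ hA hw
        rw [stOr_bot_left] at hrun
        exact hreach.mpr hrun
      · obtain ⟨t₁, hrun⟩ := buildRun h₁ h₀ hA' hw
        have h2 := hswapIn hrun
        rwa [stOr_bot_right] at h2
  have hTR : TRset (orC P₀ P₁) = TRset P₀ ∪ TRset P₁ := by
    ext w
    constructor
    · rintro (hw | ⟨c, hc⟩)
      · have h2 : w ∈ TEset P₀ ∪ TEset P₁ := hTE ▸ hw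
        rcases h2 with h2 | h2
        · exact Or.inl (Or.inl h2)
        · exact Or.inr (Or.inl h2)
      · have post := hdec hc
        unfold OrPost at post
        rcases post with ⟨p, q, -, hx, -⟩ | ⟨p, -, hx⟩ | ⟨q, -, hx⟩ | ⟨ht, -⟩ | ⟨ht, -⟩
        · exact Or.inl (Or.inr ⟨p, hx⟩)
        · exact Or.inl (Or.inr ⟨p, hx⟩)
        · exact Or.inr (Or.inr ⟨q, hx⟩)
        · exact nomatch ht
        · exact nomatch ht
    · rintro ((hw | ⟨p, hp⟩) | (hw | ⟨q, hq⟩))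
      · exact Or.inl (show w ∈ TEset (orC P₀ P₁) by rw [hTE]; exact Or.inl hw)
      · obtain ⟨t₁, hrun⟩ := buildRun h₀ h₁ hA hp
        cases t₁ with
        | plain q =>
          rw [stOr_plain_plain] at hrun
          exact Or.inr ⟨pairSt p q, hreach.mpr hrun⟩
        | bot =>
          rw [stOr_plain_bot] at hrun
          exact Or.inl (hreach.mpr hrun)
        | top =>
          rw [stOr_plain_top] at hrun
          exact Or.inr ⟨Sum.inl p, hreach.mpr hrun⟩
      · exact Or.inl (show w ∈ TEset (orC P₀ P₁) by rw [hTE]; exact Or.inr hw)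
      · obtain ⟨t₁, hrun⟩ := buildRun h₁ h₀ hA' hq
        have h2 := hswapIn hrun
        cases t₁ with
        | plain p =>
          rw [stOr_plain_plain] at h2
          exact Or.inr ⟨pairSt p q, h2⟩
        | bot =>
          rw [stOr_bot_left] at h2
          exact Or.inl h2
        | top =>
          rw [stOr_top_plain] at h2
          exact Or.inr ⟨Sum.inr (Sum.inl q), h2⟩
  refine ⟨rfl, rfl, hTE, hTR, ?_⟩
  ext w
  constructor
  · rintro ((hw | hw) | hw)
    · exact Or.inl (show w ∈ TRset P₀ ∪ TRset P₁ by rw [← hTR]; exact Or.inl hw)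
    · exact Or.inl (show w ∈ TRset P₀ ∪ TRset P₁ by rw [← hTR]; exact Or.inr ⟨_, hw.choose_spec⟩)
    · -- magic trace of the disjunction
      have post := hdec hw
      unfold OrPost at post
      rcases post with ⟨p, q, ht, -, -⟩ | ⟨p, ht, -⟩ | ⟨q, ht, -⟩ | ⟨ht, -⟩ | ⟨-, hor⟩
      · exact nomatch ht
      · exact nomatch ht
      · exact nomatch ht
      · exact nomatch ht
      by_cases hTRm : w ∈ TRset P₀ ∪ TRset P₁
      · exact Or.inl hTRm
      obtain ⟨hw0, hw1⟩ : w ∉ TRset P₀ ∧ w ∉ TRset P₁ := by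
        constructor <;> intro hcc
        · exact hTRm (Or.inl hcc)
        · exact hTRm (Or.inr hcc)
      rcases hor with ⟨hf, v, hpref, hv⟩ | ⟨hf, v, hpref, hv⟩
      · refine Or.inr (Or.inl (Or.inl ⟨⟨Or.inr hf, hw0⟩, ?_⟩))
        by_cases hvR : v ∈ TRset P₁
        · obtain ⟨u, hu⟩ := hpref
          have hwval : ValidW P₁.A w :=
            validW_hA hA (exec_validW (fun _ _ _ hh => c_valid h₀ hh) hf)
          have huval : ValidW P₁.A u := validW_tcat_right (hu ▸ hwval)
          obtain ⟨w₀, hp1, hp2, hp3⟩ := lemA h₁ u.length u le_rfl huval v hvR (by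
            rw [hu]; exact hw1)
          refine ⟨w₀, ?_, Or.inr hp2, hp3⟩
          rw [← hu]; exact hp1
        · exact ⟨v, hpref, Or.inr hv, hvR⟩
      · refine Or.inr (Or.inl (Or.inr ⟨⟨Or.inr hf, hw1⟩, ?_⟩))
        by_cases hvR : v ∈ TRset P₀
        · obtain ⟨u, hu⟩ := hpref
          have hwval : ValidW P₀.A w :=
            validW_hA hA' (exec_validW (fun _ _ _ hh => c_valid h₁ hh) hf)
          have huval : ValidW P₀.A u := validW_tcat_right (hu ▸ hwval)
          obtain ⟨w₀, hp1, hp2, hp3⟩ := lemA h₀ u.length u le_rfl huval v hvR (by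
            rw [hu]; exact hw0)
          refine ⟨w₀, ?_, Or.inr hp2, hp3⟩
          rw [← hu]; exact hp1
        · exact ⟨v, hpref, Or.inr hv, hvR⟩
  · -- backwards inclusion
    have hS : ∀ w' : TWord Act,
        ((w' ∈ TTset P₀ \ TRset P₀ ∧ ∃ w₀, Pref w₀ w' ∧ w₀ ∈ TTset P₁ \ TRset P₁) ∨
         (w' ∈ TTset P₁ \ TRset P₁ ∧ ∃ w₀, Pref w₀ w' ∧ w₀ ∈ TTset P₀ \ TRset P₀)) →
        w' ∈ TMset (orC P₀ P₁) := by
      intro w' hw'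
      rcases hw' with ⟨⟨hTT0, hnR0⟩, w₀, hpref, hTT1, hnR1⟩ | ⟨⟨hTT1, hnR1⟩, w₀, hpref, hTT0, hnR0⟩
      · have hm0 : Reach P₀.complete w' .top := by
          rcases hTT0 with (h | h) | h
          · exact absurd (Or.inl h) hnR0
          · exact absurd (Or.inr h) hnR0
          · exact h
        have hm1 : Reach P₁.complete w₀ .top := by
          rcases hTT1 with (h | h) | h
          · exact absurd (Or.inl h) hnR1
          · exact absurd (Or.inr h) hnR1
          · exact h
        obtain ⟨u, hu⟩ := hpref
        exact hreach.mpr (buildRunTop h₀ h₁ hA hm0 hm1 hu)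
      · have hm1 : Reach P₁.complete w' .top := by
          rcases hTT1 with (h | h) | h
          · exact absurd (Or.inl h) hnR1
          · exact absurd (Or.inr h) hnR1
          · exact h
        have hm0 : Reach P₀.complete w₀ .top := by
          rcases hTT0 with (h | h) | h
          · exact absurd (Or.inl h) hnR0
          · exact absurd (Or.inr h) hnR0
          · exact h
        obtain ⟨u, hu⟩ := hpref
        have hrun := buildRunTop h₁ h₀ hA' hm1 hm0 hu
        have h2 := swap_exec hA' hrun
        rw [cswap_stOr] at h2
        exact hreach.mpr h2
    rintro (hw | (hw | ⟨w₀, hw₀S, d, rfl⟩))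
    · have h2 : w ∈ TRset (orC P₀ P₁) := by rw [hTR]; exact hw
      rcases h2 with h2 | h2
      · exact Or.inl (Or.inl h2)
      · exact Or.inl (Or.inr h2)
    · exact Or.inr (hS w hw)
    · have hm := hreach.mp (hS w₀ hw₀S)
      have hstep : Exec (orC P₀ P₁) .top [TAct.delay d] .top := by
        rw [show [TAct.delay d] = tcat [TAct.delay d] [] from (tcat_nil _).symm]
        exact .cons r_top (.nil _)
      exact Or.inr (hreach.mpr (exec_append hm hstep))

end TSpec
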